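/- arXiv:2410.10404 — 8 statements merged into one kernel-verified Lean document; each statement's English description precedes it below -/
import Mathlib

section
/- For every natural number n ≥ 1, the Littlestone dimension of the universal class U_n equals ⌊log₂ n⌋, where U_n = {h_1, …, h_n} over domain X_n = {0,1}^n with h_i(x) = x_i (the i-th coordinate of x). -/
/-!
Querying a point `x` splits a class into the disjoint subclasses `h x = false` and
`h x = true`, so a class shattering a tree of depth `d` has at least `2 ^ d` members, and `U_n`
has only `n`. Conversely, for coordinate projections `x ↦ x i` with `i ∈ S`, querying the indicator
of `T ⊆ S` leaves exactly the indices in `T` and in `S \ T`; halving the index set `d` times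
shatters a tree of depth `d` as soon as `2 ^ d ≤ |S|`.
-/

/-- `Shatters H d` : the class `H` shatters some perfect binary mistake tree of depth `d`
(Littlestone shattering, in its standard inductive form). -/
inductive Shatters {X : Type*} : Set (X → Bool) → ℕ → Prop
  | zero (H : Set (X → Bool)) (hne : H.Nonempty) : Shatters H 0
  | succ (H : Set (X → Bool)) (d : ℕ) (x : X)
      (h0 : Shatters {h ∈ H | h x = false} d)
      (h1 : Shatters {h ∈ H | h x = true} d) : Shatters H (d + 1)

open Set

theorem Shatters.two_pow_le_encard {X : Type*} {H : Set (X → Bool)} {d : ℕ}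
    (hH : Shatters H d) : 2 ^ d ≤ H.encard := by
  induction hH with
  | zero H hne => simpa using hne
  | succ H d x _ _ ih₀ ih₁ =>
    have hdisj : Disjoint {h ∈ H | h x = false} {h ∈ H | h x = true} :=
      disjoint_left.2 fun h h₀ h₁ => by simp_all
    calc (2 : ℕ∞) ^ (d + 1) = 2 ^ d + 2 ^ d := by rw [pow_succ, mul_two]
      _ ≤ {h ∈ H | h x = false}.encard + {h ∈ H | h x = true}.encard := add_le_add ih₀ ih₁
      _ = ({h ∈ H | h x = false} ∪ {h ∈ H | h x = true}).encard := (encard_union_eq hdisj).symm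
      _ ≤ H.encard := encard_le_encard (union_subset (sep_subset _ _) (sep_subset _ _))

section CoordinateClass

variable {ι : Type*}

def coordinateClass (S : Set ι) : Set ((ι → Bool) → Bool) :=
  (fun i x => x i) '' S

theorem coordinateClass_sep (S : Set ι) (x : ι → Bool) (b : Bool) :
    {h ∈ coordinateClass S | h x = b} = coordinateClass {i ∈ S | x i = b} :=
  (image_inter_preimage (fun i (x : ι → Bool) => x i) S {h | h x = b}).symm

theorem shatters_coordinateClass {S : Set ι} {d : ℕ} (hS : 2 ^ d ≤ S.encard) :
    Shatters (coordinateClass S) d := by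
  classical
  induction d generalizing S with
  | zero => exact .zero _ ((one_le_encard_iff_nonempty.1 (by simpa using hS)).image _)
  | succ d ih =>
    obtain ⟨T, hTS, hT⟩ :=
      exists_subset_encard_eq ((pow_le_pow_right₀ one_le_two d.le_succ).trans hS)
    have hST : 2 ^ d ≤ (S \ T).encard := by
      refine (ENat.add_le_add_iff_right (k := 2 ^ d) (by simp)).1 ?_
      calc (2 : ℕ∞) ^ d + 2 ^ d = 2 ^ (d + 1) := by rw [pow_succ, mul_two]
        _ ≤ S.encard := hS
        _ = (S \ T).encard + 2 ^ d := by rw [← encard_sdiff_add_encard_of_subset hTS, hT]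
    refine .succ _ d (fun i => decide (i ∈ T)) ?_ ?_
    · rw [coordinateClass_sep]
      convert ih hST using 2
      ext i; simp
    · rw [coordinateClass_sep]
      convert ih hT.ge using 2
      ext i; simpa using fun h => hTS h

end CoordinateClass

/-- The Littlestone dimension of the universal class `U_n = {x ↦ x i : i ∈ [n]}` over the
domain `{0,1}^n` equals `⌊log₂ n⌋`. -/
theorem universal_class_littlestone (n : ℕ) (hn : 1 ≤ n) :
    IsGreatest {d : ℕ |
      Shatters {h : (Fin n → Bool) → Bool | ∃ i : Fin n, h = fun x => x i} d}
      (Nat.log 2 n) := by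
  have huniv : {h : (Fin n → Bool) → Bool | ∃ i : Fin n, h = fun x => x i} =
      coordinateClass univ := by
    ext h; simp [coordinateClass, eq_comm]
  simp only [huniv]
  refine ⟨shatters_coordinateClass ?_, fun d hd => Nat.le_log_of_pow_le one_lt_two ?_⟩
  · simpa using (Nat.cast_le (α := ℕ∞)).2 (Nat.pow_log_le_self 2 (by omega : n ≠ 0))
  · have hcard : (2 : ℕ∞) ^ d ≤ n := by
      simpa using hd.two_pow_le_encard.trans (encard_image_le _ univ)
    exact_mod_cast hcard
end

section
/- Let {H_i}_{i=1}^∞ be a countable collection of hypothesis classes over pairwise disjoint finite domains, and let H be the glued class obtained by extending each h ∈ H_i by 0 outside the domain of H_i. Then L(H) ≤ sup_i L(H_i) + 1. -/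
lemma Shatters.nonempty {X : Type*} {H : Set (X → Bool)} {d : ℕ}
    (h : Shatters H d) : H.Nonempty := by
  induction h with
  | zero H hne => exact hne
  | succ H d x h0 h1 ih0 ih1 => obtain ⟨g, hg, _⟩ := ih0; exact ⟨g, hg⟩

lemma Shatters.mono {X : Type*} {d : ℕ} {H : Set (X → Bool)} (h : Shatters H d) :
    ∀ H', H ⊆ H' → Shatters H' d := by
  induction h with
  | zero H hne => exact fun H' hs => .zero _ (hne.mono hs)
  | succ H d x h0 h1 ih0 ih1 =>
      intro H' hs
      exact .succ _ _ x (ih0 _ fun g hg => ⟨hs hg.1, hg.2⟩)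
        (ih1 _ fun g hg => ⟨hs hg.1, hg.2⟩)

def extFun (X : ℕ → Type*) (i : ℕ) (hh : X i → Bool) : (Σ j, X j) → Bool :=
  fun q => if hj : q.1 = i then hh (cast (congrArg X hj) q.2) else false

lemma extFun_apply_same (X : ℕ → Type*) (i : ℕ) (hh : X i → Bool) (xi : X i) :
    extFun X i hh ⟨i, xi⟩ = hh xi := by
  simp [extFun]

lemma extFun_apply_ne (X : ℕ → Type*) (i j : ℕ) (hh : X i → Bool) (xj : X j)
    (hij : j ≠ i) : extFun X i hh ⟨j, xj⟩ = false := by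
  simp [extFun, hij]

lemma shatters_of_shatters_ext {X : ℕ → Type*} (i : ℕ) :
    ∀ {d : ℕ} {G : Set ((Σ j, X j) → Bool)}, Shatters G d →
    ∀ S : Set (X i → Bool), G = {g | ∃ hh ∈ S, g = extFun X i hh} → Shatters S d := by
  intro d G h
  induction h with
  | zero G hne =>
      intro S hGS
      subst hGS
      obtain ⟨g, hh, hhS, rfl⟩ := hne
      exact .zero _ ⟨hh, hhS⟩
  | succ G d x h0 h1 ih0 ih1 =>
      intro S hGS
      subst hGS
      obtain ⟨j, xj⟩ := x
      by_cases hj : j = i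
      · subst hj
        have key : ∀ b : Bool,
            {g ∈ {g | ∃ hh ∈ S, g = extFun X j hh} | g ⟨j, xj⟩ = b}
              = {g | ∃ hh ∈ {h ∈ S | h xj = b}, g = extFun X j hh} := by
          intro b; ext g
          constructor
          · rintro ⟨⟨hh, hhS, rfl⟩, hb⟩
            exact ⟨hh, ⟨hhS, by simpa [extFun_apply_same] using hb⟩, rfl⟩
          · rintro ⟨hh, ⟨hhS, hb⟩, rfl⟩
            exact ⟨⟨hh, hhS, rfl⟩, by simpa [extFun_apply_same]⟩
        exact .succ _ _ xj (ih0 _ (key false)) (ih1 _ (key true))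
      · exfalso
        obtain ⟨g, hg, hgt⟩ := h1.nonempty
        obtain ⟨hh, hhS, rfl⟩ := hg
        rw [extFun_apply_ne X i j hh xj hj] at hgt
        exact Bool.false_ne_true hgt

/-- Gluing countably many classes `H i` over pairwise disjoint finite domains `X i`
(modelled by the sigma type `Σ i, X i`): each `h ∈ H i` is extended by `0` outside `X i`.
If `N ≥ sup_i L(H i)` then the Littlestone dimension of the glued class is at most `N + 1`. -/
theorem glued_countable_littlestone (X : ℕ → Type*) [∀ i, Fintype (X i)]
    (H : ∀ i : ℕ, Set (X i → Bool)) (N : ℕ)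
    (hN : ∀ i, ∀ d, Shatters (H i) d → d ≤ N) :
    ∀ d, Shatters
        {g : (Σ j, X j) → Bool | ∃ i : ℕ, ∃ hh ∈ H i,
          g = fun q => if hj : q.1 = i then hh (cast (congrArg X hj) q.2) else false} d →
      d ≤ N + 1 := by
  intro d hd
  cases hd with
  | zero _ hne => omega
  | succ _ d x h0 h1 =>
      obtain ⟨i, xi⟩ := x
      have hT : {g ∈ {g : (Σ j, X j) → Bool | ∃ i : ℕ, ∃ hh ∈ H i,
            g = fun q => if hj : q.1 = i then hh (cast (congrArg X hj) q.2) else false} |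
            g ⟨i, xi⟩ = true}
          ⊆ {g | ∃ hh ∈ H i, g = extFun X i hh} := by
        rintro g ⟨⟨i', hh, hhH, rfl⟩, hgt⟩
        by_cases hii : i = i'
        · subst hii; exact ⟨hh, hhH, rfl⟩
        · exfalso
          rw [show (fun q => if hj : q.1 = i' then hh (cast (congrArg X hj) q.2) else false)
              = extFun X i' hh from rfl, extFun_apply_ne X i' i hh xi hii] at hgt
          exact Bool.false_ne_true hgt
      have hS : Shatters (H i) d :=
        shatters_of_shatters_ext i (h1.mono _ hT) (H i) rfl
      have := hN i d hS
      omega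
end

section
/- Fix real numbers η ∈ (0,1) and L > 1, a time horizon T, and n experts with n ≤ ηLT. Suppose that in every round t of a subset T₀ ⊆ [T] the weighted sum ∑_{j ∈ V_t, ŷ_t^{(j)}=1} 2^{η d_t^{(j)}} is strictly less than L, where d_t^{(j)} counts the rounds in T₀ before t in which expert j predicted 1. For each expert j let D_j be its final distance, and for each d ∈ ℕ let n_d be the number of experts j with D_j ∈ [d/η, (d+1)/η]. Then ∑_{d ∈ ℕ} n_d · 2^d ≤ 3ηTL. -/
/-!
Put `r = 2^η ≤ 1 + η`. If the rounds counted by `D_j` are listed in order, then in the `k`-th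
of them the potential `r^k` of expert `j` grows by `r^{k+1} - r^k ≤ η r^k`, and `k` is at most
the current distance of `j`. Summing over experts and swapping the order of summation, the
threshold condition bounds the total potential `∑_j r^{D_j}` by `n + η |T₀| L ≤ 2ηLT`.
Expert `j` lies only in the buckets `d ∈ {m - 1, m}` with `m = ⌊ηD_j⌋`, so it contributes at
most `2^{m-1} + 2^m ≤ (3/2) r^{D_j}` to `∑_d n_d 2^d`.
-/

open Finset

theorem sum_card_filter_lt_eq_sum_range {α M : Type*} [LinearOrder α] [AddCommMonoid M]
    (f : ℕ → M) (s : Finset α) : ∑ t ∈ s, f #{t' ∈ s | t' < t} = ∑ k ∈ range #s, f k := by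
  induction s using Finset.induction_on_max with
  | empty => simp
  | insert a s ha ih =>
    have has : a ∉ s := fun h => (ha a h).false
    have hrank : ∀ t ∈ s, #{t' ∈ insert a s | t' < t} = #{t' ∈ s | t' < t} := fun t ht => by
      rw [filter_insert, if_neg (ha t ht).not_gt]
    rw [sum_insert has, card_insert_of_notMem has, sum_range_succ, sum_congr rfl fun t ht => by
      rw [hrank t ht], ih, filter_insert, if_neg (lt_irrefl a), filter_true_of_mem ha, add_comm]

theorem two_rpow_le_one_add {η : ℝ} (h0 : 0 ≤ η) (h1 : η ≤ 1) : (2 : ℝ) ^ η ≤ 1 + η := by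
  simpa [one_add_one_eq_two] using rpow_one_add_le_one_add_mul_self (s := 1) (by norm_num) h0 h1

theorem pow_le_one_add_mul_geom_sum {r η : ℝ} (hr0 : 0 ≤ r) (hr : r ≤ 1 + η) (D : ℕ) :
    r ^ D ≤ 1 + η * ∑ k ∈ range D, r ^ k := by
  have hG : 0 ≤ ∑ k ∈ range D, r ^ k := sum_nonneg fun k _ => pow_nonneg hr0 k
  nlinarith [geom_sum_mul r D]

theorem two_rpow_mul_card_le {α : Type*} [LinearOrder α] {η : ℝ} (h0 : 0 ≤ η) (h1 : η ≤ 1)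
    (A : Finset α) (w : α → ℕ) (hw : ∀ t ∈ A, #{t' ∈ A | t' < t} ≤ w t) :
    (2 : ℝ) ^ (η * #A) ≤ 1 + η * ∑ t ∈ A, (2 : ℝ) ^ (η * w t) := by
  have hr1 : 1 ≤ (2 : ℝ) ^ η := Real.one_le_rpow (by norm_num) h0
  simp_rw [Real.rpow_mul_natCast (by norm_num : (0 : ℝ) ≤ 2)]
  calc ((2 : ℝ) ^ η) ^ #A ≤ 1 + η * ∑ k ∈ range #A, ((2 : ℝ) ^ η) ^ k :=
        pow_le_one_add_mul_geom_sum (by positivity) (two_rpow_le_one_add h0 h1) _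
    _ = 1 + η * ∑ t ∈ A, ((2 : ℝ) ^ η) ^ #{t' ∈ A | t' < t} := by
        rw [sum_card_filter_lt_eq_sum_range]
    _ ≤ 1 + η * ∑ t ∈ A, ((2 : ℝ) ^ η) ^ w t := by
        gcongr with t ht
        exact hw t ht

theorem sum_two_rpow_mul_card_le {α ι : Type*} [LinearOrder α] [Fintype ι] [DecidableEq ι] {η L : ℝ}
    (h0 : 0 ≤ η) (h1 : η ≤ 1) (T₀ : Finset α) (p : α → ι → Bool) (alive : α → Finset ι)
    (hthresh : ∀ t ∈ T₀, ∑ j ∈ alive t with p t j = true,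
      (2 : ℝ) ^ (η * #{t' ∈ T₀ | t' < t ∧ p t' j = true}) ≤ L) :
    ∑ j, (2 : ℝ) ^ (η * #{t ∈ T₀ | p t j = true ∧ j ∈ alive t}) ≤ Fintype.card ι + η * (#T₀ * L) :=
  calc
    ∑ j, (2 : ℝ) ^ (η * #{t ∈ T₀ | p t j = true ∧ j ∈ alive t})
        ≤ ∑ j, (1 + η * ∑ t ∈ T₀ with p t j = true ∧ j ∈ alive t,
            (2 : ℝ) ^ (η * #{t' ∈ T₀ | t' < t ∧ p t' j = true})) := by
      gcongr with j
      refine two_rpow_mul_card_le h0 h1 _ _ fun t _ => card_le_card fun t' ht' => ?_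
      simp only [mem_filter] at ht' ⊢
      exact ⟨ht'.1.1, ht'.2, ht'.1.2.1⟩
    _ = Fintype.card ι + η * ∑ t ∈ T₀, ∑ j ∈ alive t with p t j = true,
            (2 : ℝ) ^ (η * #{t' ∈ T₀ | t' < t ∧ p t' j = true}) := by
      rw [sum_add_distrib, ← mul_sum, sum_comm' (t' := T₀)
        (s' := fun t => {j ∈ alive t | p t j = true}) fun j t => by
          simp only [mem_filter, mem_univ]; tauto]
      simp
    _ ≤ Fintype.card ι + η * (#T₀ * L) := by
      gcongr
      simpa using sum_le_card_nsmul _ _ _ hthresh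

theorem sum_two_pow_filter_le {x : ℝ} (hx : 0 ≤ x) (s : Finset ℕ) :
    ∑ d ∈ s with ((d : ℕ) : ℝ) ≤ x ∧ x ≤ d + 1, (2 : ℝ) ^ d ≤ 3 / 2 * (2 : ℝ) ^ x := by
  set m := ⌊x⌋₊
  have hsub : {d ∈ s | ((d : ℕ) : ℝ) ≤ x ∧ x ≤ d + 1} ⊆ {m - 1, m} := by
    intro d hd
    obtain ⟨-, hdx, hxd⟩ := mem_filter.1 hd
    have hdm : d ≤ m := Nat.le_floor hdx
    have hmd : m < d + 2 := (Nat.floor_lt hx).2 (by push_cast; linarith)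
    simp only [mem_insert, mem_singleton]
    omega
  have hm : (2 : ℝ) ^ m ≤ 2 ^ x := by
    rw [← Real.rpow_natCast]
    exact Real.rpow_le_rpow_of_exponent_le (by norm_num) (Nat.floor_le hx)
  calc ∑ d ∈ s with ((d : ℕ) : ℝ) ≤ x ∧ x ≤ d + 1, (2 : ℝ) ^ d ≤ ∑ d ∈ {m - 1, m}, (2 : ℝ) ^ d :=
        sum_le_sum_of_subset_of_nonneg hsub fun d _ _ => by positivity
    _ ≤ 3 / 2 * 2 ^ m := by
        rcases m with _ | k
        · norm_num
        · rw [sum_pair (by omega), Nat.add_sub_cancel, pow_succ]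
          linarith [pow_pos (two_pos (α := ℝ)) k]
    _ ≤ 3 / 2 * 2 ^ x := by linarith

theorem experts_realizable_helper_general
    (n T : ℕ) (η L : ℝ) (hη : η ∈ Set.Ioo (0 : ℝ) 1) (hL : 1 < L)
    (hn : (n : ℝ) ≤ η * L * T)
    (T₀ : Finset (Fin T)) (p : Fin T → Fin n → Bool)
    (V : ℕ → Finset (Fin n))
    (dist : Fin T → Fin n → ℕ)
    (hdist : ∀ t j, dist t j = (T₀.filter (fun t' => t'.val < t.val ∧ p t' j = true)).card)
    (hthresh : ∀ t ∈ T₀,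
      ∑ j ∈ (V t.val).filter (fun j => p t j = true), (2 : ℝ) ^ (η * dist t j) < L)
    (D : Fin n → ℕ)
    (hD : ∀ j, D j = (T₀.filter (fun t => p t j = true ∧ j ∈ V t.val)).card)
    (nd : ℕ → ℕ)
    (hnd : ∀ d : ℕ, nd d =
      (Finset.univ.filter (fun j : Fin n =>
        (d : ℝ) / η ≤ (D j : ℝ) ∧ (D j : ℝ) ≤ ((d : ℝ) + 1) / η)).card) :
    ∑' d : ℕ, (nd d : ℝ) * 2 ^ d ≤ 3 * η * T * L := by
  obtain ⟨hη0, hη1⟩ := hη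
  have hT₀ : #T₀ ≤ T := by simpa using card_le_univ T₀
  have hpot : ∑ j, (2 : ℝ) ^ (η * D j) ≤ n + η * (#T₀ * L) := by
    simpa [hD] using sum_two_rpow_mul_card_le hη0.le hη1.le T₀ p (fun t => V t.val)
      fun t ht => by simpa only [hdist, Fin.lt_def] using (hthresh t ht).le
  have hvanish : ∀ d ∉ range (T + 1), (nd d : ℝ) * 2 ^ d = 0 := by
    intro d hd
    suffices nd d = 0 by simp [this]
    rw [hnd, card_eq_zero, filter_eq_empty_iff]
    rintro j - ⟨hdD, -⟩
    have hDT : (D j : ℝ) ≤ T := by exact_mod_cast hD j ▸ (card_filter_le _ _).trans hT₀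
    have hTd : (T : ℝ) + 1 ≤ d := by exact_mod_cast not_lt.1 (mt mem_range.2 hd)
    rw [div_le_iff₀ hη0] at hdD
    nlinarith
  rw [tsum_eq_sum hvanish]
  calc
    ∑ d ∈ range (T + 1), (nd d : ℝ) * 2 ^ d
        = ∑ j, ∑ d ∈ range (T + 1) with ((d : ℕ) : ℝ) ≤ D j * η ∧ D j * η ≤ d + 1, (2 : ℝ) ^ d := by
      simp_rw [hnd, div_le_iff₀ hη0, le_div_iff₀ hη0, card_filter, Nat.cast_sum, sum_mul,
        sum_filter]
      rw [sum_comm]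
      simp
    _ ≤ ∑ j, 3 / 2 * (2 : ℝ) ^ (η * D j) := by
      gcongr with j
      rw [mul_comm]
      exact sum_two_pow_filter_le (by positivity) _
    _ ≤ 3 * η * T * L := by
      rw [← mul_sum]
      have hT₀L : (#T₀ : ℝ) * L ≤ T * L :=
        mul_le_mul_of_nonneg_right (by exact_mod_cast hT₀) (by linarith)
      nlinarith [hT₀L, hpot]

/-- Lemma (total weighted distance gained, realizable case). With `n` experts, threshold
condition in every round of `T₀` (the rounds where the learner predicts `0`), monotone
version spaces that only shrink outside `T₀`, distances counting earlier `T₀`-rounds where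
the expert predicted `1`, final distances `D j` and counts `n_d` of experts whose final
distance lies in `[d/η, (d+1)/η]`, we have `∑_d n_d · 2^d ≤ 3ηTL`. -/
theorem experts_realizable_helper
    (n T : ℕ) (η L : ℝ) (hη : η ∈ Set.Ioo (0 : ℝ) 1) (hL : 1 < L)
    (hn : (n : ℝ) ≤ η * L * T)
    (T₀ : Finset (Fin T)) (p : Fin T → Fin n → Bool)
    (V : ℕ → Finset (Fin n))
    (hV0 : V 0 = Finset.univ)
    (hVmono : ∀ t : Fin T, V (t.val + 1) ⊆ V t.val)
    (hVkeep : ∀ t ∈ T₀, V (t.val + 1) = V t.val)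
    (dist : Fin T → Fin n → ℕ)
    (hdist : ∀ t j, dist t j = (T₀.filter (fun t' => t'.val < t.val ∧ p t' j = true)).card)
    (hthresh : ∀ t ∈ T₀,
      ∑ j ∈ (V t.val).filter (fun j => p t j = true), (2 : ℝ) ^ (η * dist t j) < L)
    (D : Fin n → ℕ)
    (hD : ∀ j, D j = (T₀.filter (fun t => p t j = true ∧ j ∈ V t.val)).card)
    (nd : ℕ → ℕ)
    (hnd : ∀ d : ℕ, nd d =
      (Finset.univ.filter (fun j : Fin n =>
        (d : ℝ) / η ≤ (D j : ℝ) ∧ (D j : ℝ) ≤ ((d : ℝ) + 1) / η)).card) :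
    ∑' d : ℕ, (nd d : ℝ) * 2 ^ d ≤ 3 * η * T * L :=
  experts_realizable_helper_general n T η L hη hL hn T₀ p V dist hdist hthresh D hD nd hnd
end

section
/- Under the hypotheses of the RealizableExpAT algorithm with parameters η ∈ (0,1) and L > 1 satisfying n ≤ ηLT, on any realizable input sequence of length T the number of false negative mistakes satisfies M₋ ≤ (log₂ L)/η + 1, and the number of false positive mistakes satisfies M₊ ≤ 6ηT. -/
open Finset

theorem card_le_of_forall_card_filter_lt {α : Type*} [LinearOrder α] {S : Finset α} {m : ℕ}
    (h : ∀ τ ∈ S, #{s ∈ S | s < τ} < m) : #S ≤ m := by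
  rcases S.eq_empty_or_nonempty with rfl | hS
  · simp
  · have hmax := h _ (S.max'_mem hS)
    have heq : {s ∈ S | s < S.max' hS} = S.erase (S.max' hS) := by
      ext s
      simp only [mem_filter, mem_erase]
      exact ⟨fun ⟨hs, hlt⟩ => ⟨hlt.ne, hs⟩, fun ⟨hne, hs⟩ => ⟨hs, (S.le_max' s hs).lt_of_ne hne⟩⟩
    rw [heq, card_erase_of_mem (S.max'_mem hS)] at hmax
    omega

theorem amortized_add_card_nsmul_le {M : Type*} [AddCommMonoid M] [PartialOrder M]
    [IsOrderedAddMonoid M] {T : ℕ} (S : Finset (Fin T)) (a : ℕ → M) (b c : M)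
    (hstep : ∀ τ : Fin T, a τ + (if τ ∈ S then c else 0) ≤ a ((τ : ℕ) + 1) + b) :
    ∀ t ≤ T, a 0 + #{s ∈ S | s.val < t} • c ≤ a t + t • b := by
  intro t ht
  induction t with
  | zero => simp
  | succ t ih =>
    set τ : Fin T := ⟨t, ht⟩
    have hsplit : {s ∈ S | s.val < t + 1} = {s ∈ S | s.val < t} ∪ {s ∈ S | s = τ} := by
      ext s
      simp only [mem_filter, mem_union, Nat.lt_succ_iff_lt_or_eq, Fin.ext_iff, ← and_or_left]
      rfl
    have hdisj : Disjoint {s ∈ S | s.val < t} {s ∈ S | s = τ} :=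
      disjoint_filter.2 fun s _ hs hsτ => by simp [hsτ, τ] at hs
    have hτ : #{s ∈ S | s = τ} • c = if τ ∈ S then c else 0 := by
      rw [filter_eq']
      split_ifs <;> simp
    calc a 0 + #{s ∈ S | s.val < t + 1} • c
        = (a 0 + #{s ∈ S | s.val < t} • c) + (if τ ∈ S then c else 0) := by
          rw [hsplit, card_union_of_disjoint hdisj, add_nsmul, hτ, add_assoc]
      _ ≤ (a t + t • b) + (if τ ∈ S then c else 0) := add_le_add_left (ih (by omega)) _
      _ = (a τ + (if τ ∈ S then c else 0)) + t • b := by abel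
      _ ≤ (a ((τ : ℕ) + 1) + b) + t • b := add_le_add_left (hstep τ) _
      _ = a (t + 1) + (t + 1) • b := by rw [succ_nsmul]; abel

section ExpWeight

variable {ι : Type*}

noncomputable def expWeight (η : ℝ) (s : Finset ι) (d : ι → ℕ) : ℝ :=
  ∑ j ∈ s, (2 : ℝ) ^ (η * d j)

theorem expWeight_nonneg (η : ℝ) (s : Finset ι) (d : ι → ℕ) : 0 ≤ expWeight η s d :=
  sum_nonneg fun _ _ => by positivity

theorem expWeight_add_indicator (η : ℝ) (s : Finset ι) (q : ι → Prop) [DecidablePred q]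
    (d : ι → ℕ) :
    expWeight η s (fun j => d j + if q j then 1 else 0) =
      expWeight η s d + (2 ^ η - 1) * expWeight η {j ∈ s | q j} d := by
  unfold expWeight
  rw [sum_filter, mul_sum, ← sum_add_distrib]
  refine sum_congr rfl fun j _ => ?_
  by_cases hq : q j
  · simp only [hq, if_true, Nat.cast_add_one, mul_add_one, Real.rpow_add two_pos]
    ring
  · simp [hq]

end ExpWeight

def ExpATRound {ι : Type*} (η L : ℝ) (pred : ι → Bool) (label : Bool) (V V' : Finset ι) (d d' : ι → ℕ)
    (ŷ : Bool) : Prop :=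
  (ŷ = true ↔ L ≤ expWeight η {j ∈ V | pred j = true} d) ∧
  (ŷ = true → (∀ j, d' j = d j) ∧ V' = if label = true then V else {j ∈ V | pred j = false}) ∧
  (ŷ = false → V' = V ∧ ∀ j, d' j = d j + if pred j = true then 1 else 0)

namespace ExpATRound

variable {ι : Type*} {η L : ℝ} {pred : ι → Bool} {label ŷ : Bool} {V V' : Finset ι} {d d' : ι → ℕ}

theorem mem (h : ExpATRound η L pred label V V' d d' ŷ) {j : ι} (hj : pred j = label)
    (hjV : j ∈ V) : j ∈ V' := by
  cases ŷ
  · rwa [(h.2.2 rfl).1]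
  · rw [(h.2.1 rfl).2]
    split_ifs with hl
    · exact hjV
    · exact mem_filter.2 ⟨hjV, by simpa [hj] using hl⟩

theorem add_le_dist (h : ExpATRound η L pred label V V' d d' ŷ) {j : ι} (hj : pred j = label) :
    d j + (if ŷ = false ∧ label = true then 1 else 0) ≤ d' j := by
  cases ŷ
  · simp [(h.2.2 rfl).2 j, hj]
  · simp [(h.2.1 rfl).1 j]

theorem expWeight_lt (h : ExpATRound η L pred label V V' d d' ŷ) (hŷ : ŷ = false) :
    expWeight η {j ∈ V | pred j = true} d < L := by
  by_contra! hL
  simpa [hŷ] using h.1.2 hL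

theorem two_rpow_lt (h : ExpATRound η L pred label V V' d d' ŷ) (hŷ : ŷ = false) {j : ι}
    (hjV : j ∈ V) (hj : pred j = true) : (2 : ℝ) ^ (η * d j) < L :=
  (single_le_sum (f := fun j => (2 : ℝ) ^ (η * d j)) (fun _ _ => by positivity)
    (mem_filter.2 ⟨hjV, hj⟩)).trans_lt (h.expWeight_lt hŷ)

theorem expWeight_add_le (h : ExpATRound η L pred label V V' d d' ŷ) (hη0 : 0 ≤ η)
    (hη1 : η ≤ 1) (hL : 0 ≤ L) :
    expWeight η V' d' + (if ŷ = true ∧ label = false then L else 0) ≤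
      expWeight η V d + η * L := by
  have hηL : 0 ≤ η * L := mul_nonneg hη0 hL
  cases ŷ
  · obtain ⟨hV, hd⟩ := h.2.2 rfl
    have hW := h.expWeight_lt rfl
    have hgrowth : (2 ^ η - 1) * expWeight η {j ∈ V | pred j = true} d ≤ η * L :=
      calc (2 ^ η - 1) * expWeight η {j ∈ V | pred j = true} d
          ≤ η * expWeight η {j ∈ V | pred j = true} d :=
            mul_le_mul_of_nonneg_right (by linarith [two_rpow_le_one_add hη0 hη1])
              (expWeight_nonneg _ _ _)
        _ ≤ η * L := mul_le_mul_of_nonneg_left hW.le hη0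
    rw [hV, funext hd, expWeight_add_indicator]
    simp only [Bool.false_eq_true, false_and, if_false, add_zero]
    linarith
  · obtain ⟨hd, hV⟩ := h.2.1 rfl
    rw [funext hd, hV]
    cases label
    · have hW := h.1.1 rfl
      have hsplit := sum_filter_add_sum_filter_not V (pred · = true) fun j => (2 : ℝ) ^ (η * d j)
      simp only [Bool.not_eq_true] at hsplit
      simp only [expWeight, if_true, and_self, Bool.false_eq_true, if_false] at hW ⊢
      linarith
    · simpa using hηL

end ExpATRound

def IsExpATRun {ι : Type*} {T : ℕ} (η L : ℝ) (p : Fin T → ι → Bool) (y : Fin T → Bool)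
    (V : ℕ → Finset ι) (dist : ℕ → ι → ℕ) (yhat : Fin T → Bool) : Prop :=
  ∀ τ : Fin T, ExpATRound η L (p τ) (y τ) (V τ) (V ((τ : ℕ) + 1)) (dist τ)
    (dist ((τ : ℕ) + 1)) (yhat τ)

namespace IsExpATRun

variable {ι : Type*} {T : ℕ} {η L : ℝ} {p : Fin T → ι → Bool} {y : Fin T → Bool}
  {V : ℕ → Finset ι} {dist : ℕ → ι → ℕ} {yhat : Fin T → Bool}

theorem mem (h : IsExpATRun η L p y V dist yhat) {j : ι} (hj : ∀ τ, p τ j = y τ)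
    (h0 : j ∈ V 0) : ∀ t ≤ T, j ∈ V t := by
  intro t ht
  induction t with
  | zero => exact h0
  | succ t ih => exact (h ⟨t, ht⟩).mem (hj _) (ih (by omega))

theorem card_falseNeg_le (h : IsExpATRun η L p y V dist yhat) (hη : 0 < η) (hL : 1 ≤ L)
    {j : ι} (hj : ∀ τ, p τ j = y τ) (hmem : ∀ t ≤ T, j ∈ V t) :
    (#{τ | yhat τ = false ∧ y τ = true} : ℝ) ≤ Real.logb 2 L / η + 1 := by
  set S : Finset (Fin T) := {τ | yhat τ = false ∧ y τ = true}
  have hx : 0 ≤ Real.logb 2 L / η := div_nonneg (Real.logb_nonneg one_lt_two hL) hη.le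
  have hcount := amortized_add_card_nsmul_le S (fun t => dist t j) 0 1 fun τ => by
    simpa [S] using (h τ).add_le_dist (hj τ)
  have hS : #S ≤ ⌈Real.logb 2 L / η⌉₊ := by
    refine card_le_of_forall_card_filter_lt fun τ hτ => ?_
    obtain ⟨hŷ, hy⟩ := (mem_filter.1 hτ).2
    have hlt := (h τ).two_rpow_lt hŷ (hmem τ τ.2.le) (by rw [hj, hy])
    rw [← Real.lt_logb_iff_rpow_lt one_lt_two (by linarith), ← lt_div_iff₀' hη] at hlt
    have hbefore : #{s ∈ S | s < τ} ≤ dist τ j := by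
      have := hcount τ τ.2.le
      simp only [smul_eq_mul, mul_one, mul_zero, add_zero] at this
      exact (Nat.le_add_left _ _).trans this
    exact hbefore.trans_lt (Nat.lt_ceil.2 hlt)
  calc (#S : ℝ) ≤ ⌈Real.logb 2 L / η⌉₊ := by exact_mod_cast hS
    _ ≤ Real.logb 2 L / η + 1 := (Nat.ceil_lt_add_one hx).le

theorem mul_card_falsePos_le (h : IsExpATRun η L p y V dist yhat) (hη0 : 0 ≤ η) (hη1 : η ≤ 1)
    (hL : 0 ≤ L) :
    L * #{τ | yhat τ = true ∧ y τ = false} ≤ expWeight η (V 0) (dist 0) + η * L * T := by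
  have hpot := amortized_add_card_nsmul_le {τ | yhat τ = true ∧ y τ = false}
    (fun t => -expWeight η (V t) (dist t)) (η * L) L
    (fun τ => by
      have := (h τ).expWeight_add_le hη0 hη1 hL
      simp only [mem_filter, mem_univ, true_and]
      linarith) T le_rfl
  rw [filter_true_of_mem fun s _ => s.2] at hpot
  simp only [nsmul_eq_mul] at hpot
  linarith [expWeight_nonneg η (V T) (dist T)]

end IsExpATRun

/-- Mistake bounds of `RealizableExpAT`. The algorithm's state: version space `V`,
distances `dist`, and predictions `yhat` (predict `1` iff the total weight of alive
experts predicting `1` reaches the threshold `L`). On a realizable sequence, under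
`η ∈ (0,1)`, `L > 1` and `n ≤ ηLT`, the number of false negatives is at most
`log₂ L / η + 1` and the number of false positives is at most `6ηT`. -/
theorem realizableExpAT_mistake_bounds
    (n T : ℕ) (η L : ℝ) (hη : η ∈ Set.Ioo (0 : ℝ) 1) (hL : 1 < L)
    (hn : (n : ℝ) ≤ η * L * T)
    (p : Fin T → Fin n → Bool) (y : Fin T → Bool)
    (hreal : ∃ j : Fin n, ∀ t, p t j = y t)
    (V : ℕ → Finset (Fin n)) (dist : ℕ → Fin n → ℕ)
    (hV0 : V 0 = Finset.univ) (hdist0 : ∀ j, dist 0 j = 0)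
    (yhat : Fin T → Bool)
    (hyhat : ∀ t : Fin T, yhat t = true ↔
      L ≤ ∑ j ∈ (V t.val).filter (fun j => p t j = true), (2 : ℝ) ^ (η * dist t.val j))
    (hup1 : ∀ t : Fin T, yhat t = true →
      (∀ j, dist (t.val + 1) j = dist t.val j) ∧
      V (t.val + 1) =
        (if y t = true then V t.val else (V t.val).filter (fun j => p t j = false)))
    (hup0 : ∀ t : Fin T, yhat t = false →
      V (t.val + 1) = V t.val ∧
      ∀ j, dist (t.val + 1) j = dist t.val j + (if p t j = true then 1 else 0)) :
    ((Finset.univ.filter (fun t : Fin T => yhat t = false ∧ y t = true)).card : ℝ)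
        ≤ Real.logb 2 L / η + 1 ∧
    ((Finset.univ.filter (fun t : Fin T => yhat t = true ∧ y t = false)).card : ℝ)
        ≤ 6 * η * T := by
  obtain ⟨hη0, hη1⟩ := hη
  obtain ⟨j, hj⟩ := hreal
  have hrun : IsExpATRun η L p y V dist yhat := fun τ => ⟨hyhat τ, hup1 τ, hup0 τ⟩
  refine ⟨hrun.card_falseNeg_le hη0 hL.le hj (hrun.mem hj (hV0 ▸ mem_univ j)), ?_⟩
  have hW0 : expWeight η (V 0) (dist 0) = n := by simp [expWeight, hV0, hdist0]
  have hFP : L * #{τ | yhat τ = true ∧ y τ = false} ≤ L * (2 * η * T) := by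
    linarith [hrun.mul_card_falsePos_le hη0.le hη1.le (by linarith)]
  have hFP' := le_of_mul_le_mul_left hFP (by linarith)
  linarith [mul_nonneg hη0.le (Nat.cast_nonneg (α := ℝ) T)]
end

section
/- For every time horizon T ≥ 2 and number of experts n ≥ 2, there is a deterministic prediction strategy under apple tasting feedback that makes at most 7√(T log₂ n) + 1 mistakes on any realizable sequence of expert predictions of length T. -/
/-- A deterministic learner for prediction with expert advice under apple tasting
feedback: it maps the history (experts' predictions and, when the learner predicted `1`,
the revealed true label) together with the current experts' predictions to a prediction. -/
def ExpertLearner (n : ℕ) : Type :=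
  List ((Fin n → Bool) × Option Bool) → (Fin n → Bool) → Bool

/-- The feedback history produced by running learner `Lrn` on expert predictions `P`
and true labels `y` under apple tasting feedback. -/
def histE (n : ℕ) (Lrn : ExpertLearner n) (P : ℕ → Fin n → Bool) (y : ℕ → Bool) :
    ℕ → List ((Fin n → Bool) × Option Bool)
  | 0 => []
  | t + 1 =>
      histE n Lrn P y t ++
        [(P t, if Lrn (histE n Lrn P y t) (P t) = true then some (y t) else none)]

/-- The learner's prediction in round `t`. -/
def predE (n : ℕ) (Lrn : ExpertLearner n) (P : ℕ → Fin n → Bool) (y : ℕ → Bool)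
    (t : ℕ) : Bool :=
  Lrn (histE n Lrn P y t) (P t)

/-- The number of mistakes made by the learner during the first `T` rounds. -/
def mistakesE (n : ℕ) (Lrn : ExpertLearner n) (P : ℕ → Fin n → Bool) (y : ℕ → Bool)
    (T : ℕ) : ℕ :=
  ((Finset.range T).filter (fun t => predE n Lrn P y t ≠ y t)).card

/-!
The learner keeps the experts consistent with every revealed label, gives each the weight
`(1 + ε) ^ c`, where `c` counts the unrevealed rounds in which it predicted `1`, and predicts `1`
iff the experts predicting `1` carry at least an `ε` fraction of the total weight `W`.
An unrevealed round multiplies `W` by at most `1 + ε²`, a false positive by at most `1 - ε`,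
and a revealed `1` does not increase it. The consistent expert is never discarded and its
counter is the number of false negatives, so `(1 + ε) ^ #FN ≤ n (1 + ε²) ^ T (1 - ε) ^ #FP`.
Taking logarithms, the number of mistakes times `ε` is at most `2 (log n + T ε²)`, which for
`ε = √(log₂ n / T)` gives `4 √(T log₂ n)`. If `T ≤ log₂ n`, always predicting `0` suffices.
-/

lemma Real.log_le_logb_two {x : ℝ} (hx : 1 ≤ x) : Real.log x ≤ Real.logb 2 x := by
  rw [Real.logb, le_div_iff₀ (Real.log_pos one_lt_two)]
  nlinarith [Real.log_nonneg hx, Real.log_two_lt_d9]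

lemma Real.mul_sqrt_div_self {x y : ℝ} (hx : 0 ≤ x) : x * √(y / x) = √(x * y) := by
  rcases hx.eq_or_lt with rfl | hx
  · simp
  rw [← Real.sqrt_sq hx.le, ← Real.sqrt_mul (sq_nonneg x), Real.sqrt_sq hx.le]
  congr 1
  field_simp

lemma add_mul_le_of_one_add_pow_le {ε N : ℝ} {a b T : ℕ} (hε₀ : 0 < ε) (hε₁ : ε < 1)
    (hN : 0 < N) (h : (1 + ε) ^ a ≤ N * (1 + ε ^ 2) ^ T * (1 - ε) ^ b) :
    (a + b) * ε ≤ 2 * (Real.log N + T * ε ^ 2) := by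
  have hlog := Real.log_le_log (by positivity) h
  rw [Real.log_mul (by positivity) (by positivity), Real.log_mul hN.ne' (by positivity),
    Real.log_pow, Real.log_pow, Real.log_pow] at hlog
  have hup : Real.log (1 + ε ^ 2) ≤ ε ^ 2 := by
    linarith [Real.log_le_sub_one_of_pos (show 0 < 1 + ε ^ 2 by positivity)]
  have hdown : Real.log (1 - ε) ≤ -ε := by
    linarith [Real.log_le_sub_one_of_pos (show 0 < 1 - ε by linarith)]
  have hhalf : ε / 2 ≤ Real.log (1 + ε) := by
    refine le_trans ?_ (Real.le_log_one_add_of_nonneg hε₀.le)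
    rw [div_le_div_iff₀ (by norm_num) (by linarith)]
    nlinarith
  have ha : (a : ℝ) * (ε / 2) ≤ a * Real.log (1 + ε) := by gcongr
  have hb : (b : ℝ) * Real.log (1 - ε) ≤ b * -ε := by gcongr
  have hT : (T : ℝ) * Real.log (1 + ε ^ 2) ≤ T * ε ^ 2 := by gcongr
  nlinarith


namespace RealizableExpAT

open Finset

variable {n : ℕ}

structure State (n : ℕ) where
  alive : Finset (Fin n)
  count : Fin n → ℕ

def State.update (s : State n) (e : (Fin n → Bool) × Option Bool) : State n :=
  match e.2 with
  | none => ⟨s.alive, fun i => s.count i + if e.1 i then 1 else 0⟩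
  | some b => ⟨{i ∈ s.alive | e.1 i = b}, s.count⟩

def State.ofHistory (h : List ((Fin n → Bool) × Option Bool)) : State n :=
  h.foldl State.update ⟨univ, fun _ => 0⟩

def State.weight (ε : ℝ) (s : State n) : ℝ :=
  ∑ i ∈ s.alive, (1 + ε) ^ s.count i

def State.onesWeight (ε : ℝ) (s : State n) (x : Fin n → Bool) : ℝ :=
  ∑ i ∈ s.alive with x i, (1 + ε) ^ s.count i

noncomputable def learner (n : ℕ) (ε : ℝ) : ExpertLearner n := fun h x =>
  decide (ε * (State.ofHistory h).weight ε ≤ (State.ofHistory h).onesWeight ε x)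

namespace State

variable {ε : ℝ} (s : State n) (x : Fin n → Bool)

lemma onesWeight_le_weight (hε : 0 ≤ ε) : s.onesWeight ε x ≤ s.weight ε :=
  sum_le_sum_of_subset_of_nonneg (filter_subset _ _)
    fun _ _ _ => pow_nonneg (by linarith) _

lemma one_add_pow_count_le_weight (hε : 0 ≤ ε) {i : Fin n} (hi : i ∈ s.alive) :
    (1 + ε) ^ s.count i ≤ s.weight ε :=
  single_le_sum (f := fun i => (1 + ε) ^ s.count i) (fun _ _ => pow_nonneg (by linarith) _) hi

lemma weight_update_none :
    (s.update (x, none)).weight ε = s.weight ε + ε * s.onesWeight ε x := by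
  simp only [update, weight, onesWeight, sum_filter, mul_sum,
    ← sum_add_distrib]
  refine sum_congr rfl fun i _ => ?_
  split_ifs <;> simp [pow_succ]; ring

lemma weight_update_some_true : (s.update (x, some true)).weight ε = s.onesWeight ε x :=
  rfl

lemma weight_update_some_false :
    (s.update (x, some false)).weight ε = s.weight ε - s.onesWeight ε x := by
  rw [eq_sub_iff_add_eq, add_comm]
  unfold weight onesWeight
  rw [← sum_filter_add_sum_filter_not s.alive (fun i => x i = true)]
  simp [update]

lemma weight_update_none_le (hε : 0 ≤ ε) (h : s.onesWeight ε x < ε * s.weight ε) :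
    (s.update (x, none)).weight ε ≤ (1 + ε ^ 2) * s.weight ε := by
  rw [weight_update_none]
  nlinarith

lemma weight_update_some_false_le (h : ε * s.weight ε ≤ s.onesWeight ε x) :
    (s.update (x, some false)).weight ε ≤ (1 - ε) * s.weight ε := by
  rw [weight_update_some_false]
  linarith

end State

section Mistakes

variable (Lrn : ExpertLearner n) (P : ℕ → Fin n → Bool) (y : ℕ → Bool)

def falseNegatives (T : ℕ) : ℕ :=
  #{t ∈ range T | predE n Lrn P y t = false ∧ y t = true}

def falsePositives (T : ℕ) : ℕ :=
  #{t ∈ range T | predE n Lrn P y t = true ∧ y t = false}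

lemma mistakesE_eq_falseNegatives_add_falsePositives (T : ℕ) :
    mistakesE n Lrn P y T = falseNegatives Lrn P y T + falsePositives Lrn P y T := by
  rw [mistakesE, falseNegatives, falsePositives, ← card_union_of_disjoint]
  · congr 1
    ext t
    simp only [mem_filter, mem_union, ← and_or_left]
    cases predE n Lrn P y t <;> cases y t <;> simp
  · refine disjoint_filter.2 fun t _ h₀ h₁ => ?_
    simp [h₀.1] at h₁

lemma falseNegatives_succ (t : ℕ) :
    falseNegatives Lrn P y (t + 1) = falseNegatives Lrn P y t +
      if predE n Lrn P y t = false ∧ y t = true then 1 else 0 := by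
  simp only [falseNegatives, card_filter, sum_range_succ]

lemma falsePositives_succ (t : ℕ) :
    falsePositives Lrn P y (t + 1) = falsePositives Lrn P y t +
      if predE n Lrn P y t = true ∧ y t = false then 1 else 0 := by
  simp only [falsePositives, card_filter, sum_range_succ]

lemma mistakesE_le (T : ℕ) : mistakesE n Lrn P y T ≤ T :=
  (card_filter_le _ _).trans (card_range T).le

end Mistakes

section Run

variable (ε : ℝ) (P : ℕ → Fin n → Bool) (y : ℕ → Bool)

noncomputable def runState (t : ℕ) : State n :=
  State.ofHistory (histE n (learner n ε) P y t)

lemma runState_succ (t : ℕ) :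
    runState ε P y (t + 1) = (runState ε P y t).update
      (P t, if predE n (learner n ε) P y t then some (y t) else none) := by
  simp only [runState, histE, State.ofHistory, List.foldl_append]
  rfl

lemma predE_learner_eq_true_iff (t : ℕ) :
    predE n (learner n ε) P y t = true ↔
      ε * (runState ε P y t).weight ε ≤ (runState ε P y t).onesWeight ε (P t) :=
  decide_eq_true_iff

variable {ε P y}

lemma mem_alive_runState_and_count_eq {j : Fin n} {t : ℕ} (hj : ∀ s < t, P s j = y s) :
    j ∈ (runState ε P y t).alive ∧
      (runState ε P y t).count j = falseNegatives (learner n ε) P y t := by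
  induction t with
  | zero => exact ⟨mem_univ j, rfl⟩
  | succ t ih =>
    obtain ⟨hmem, hcount⟩ := ih fun s hs => hj s (by omega)
    have hjt := hj t (by omega)
    rw [runState_succ, falseNegatives_succ]
    cases hp : predE n (learner n ε) P y t
    · refine ⟨hmem, ?_⟩
      simp [State.update, hcount, hjt]
    · simp [State.update, hmem, hcount, hjt]

lemma one_add_pow_falseNegatives_le_weight (hε : 0 ≤ ε) {j : Fin n} {t : ℕ}
    (hj : ∀ s < t, P s j = y s) :
    (1 + ε) ^ falseNegatives (learner n ε) P y t ≤ (runState ε P y t).weight ε := by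
  obtain ⟨hmem, hcount⟩ := mem_alive_runState_and_count_eq hj
  rw [← hcount]
  exact State.one_add_pow_count_le_weight _ hε hmem

lemma weight_runState_le (hε₀ : 0 ≤ ε) (hε₁ : ε ≤ 1) (t : ℕ) :
    (runState ε P y t).weight ε ≤
      n * (1 + ε ^ 2) ^ t * (1 - ε) ^ falsePositives (learner n ε) P y t := by
  induction t with
  | zero => simp [runState, State.ofHistory, State.weight, histE, falsePositives]
  | succ t ih =>
    set s := runState ε P y t
    set B := (n : ℝ) * (1 + ε ^ 2) ^ t * (1 - ε) ^ falsePositives (learner n ε) P y t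
    have hB : 0 ≤ B := by have := sub_nonneg.2 hε₁; positivity
    have hgrow : 1 ≤ 1 + ε ^ 2 := by nlinarith
    rw [runState_succ, falsePositives_succ, pow_succ (1 + ε ^ 2)]
    cases hp : predE n (learner n ε) P y t
    · have hlt : s.onesWeight ε (P t) < ε * s.weight ε :=
        not_le.1 fun h => by simp [(predE_learner_eq_true_iff ε P y t).2 h] at hp
      simp only [Bool.false_eq_true, if_false, false_and, add_zero]
      calc (s.update (P t, none)).weight ε ≤ (1 + ε ^ 2) * s.weight ε :=
            s.weight_update_none_le _ hε₀ hlt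
        _ ≤ _ := by nlinarith
    · have hge := (predE_learner_eq_true_iff ε P y t).1 hp
      cases hy : y t
      · simp only [if_true, and_self, pow_succ (1 - ε)]
        calc (s.update (P t, some false)).weight ε ≤ (1 - ε) * s.weight ε :=
            s.weight_update_some_false_le _ hge
          _ ≤ (1 - ε) * B := by gcongr
          _ ≤ _ := by nlinarith [mul_nonneg hB (sub_nonneg.2 hε₁)]
      · simp only [if_true, Bool.true_eq_false, and_false, if_false, add_zero]
        calc (s.update (P t, some true)).weight ε ≤ s.weight ε :=
            (s.weight_update_some_true _).trans_le (s.onesWeight_le_weight _ hε₀)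
          _ ≤ _ := by nlinarith

end Run

lemma mistakesE_learner_mul_le {ε : ℝ} (hε₀ : 0 < ε) (hε₁ : ε < 1) {P : ℕ → Fin n → Bool}
    {y : ℕ → Bool} {T : ℕ} (hreal : ∃ j : Fin n, ∀ t < T, P t j = y t) :
    (mistakesE n (learner n ε) P y T : ℝ) * ε ≤ 2 * (Real.log n + T * ε ^ 2) := by
  obtain ⟨j, hj⟩ := hreal
  rw [mistakesE_eq_falseNegatives_add_falsePositives, Nat.cast_add]
  exact add_mul_le_of_one_add_pow_le hε₀ hε₁ (by exact_mod_cast j.pos)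
    ((one_add_pow_falseNegatives_le_weight hε₀.le hj).trans
      (weight_runState_le hε₀.le hε₁.le T))

end RealizableExpAT

open RealizableExpAT

theorem experts_realizable_upper_bound_general (n T : ℕ) (hn : 2 ≤ n) :
    ∃ Lrn : ExpertLearner n, ∀ (P : ℕ → Fin n → Bool) (y : ℕ → Bool),
      (∃ j : Fin n, ∀ t < T, P t j = y t) →
      (mistakesE n Lrn P y T : ℝ) ≤ 7 * Real.sqrt (T * Real.logb 2 n) + 1 := by
  set L := Real.logb 2 n
  have hn' : (1 : ℝ) < n := by exact_mod_cast hn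
  have hL : 0 < L := Real.logb_pos one_lt_two hn'
  rcases le_or_gt (T : ℝ) L with hTL | hLT
  · refine ⟨fun _ _ => false, fun P y _ => ?_⟩
    have hT : (T : ℝ) ≤ √(T * L) := Real.le_sqrt_of_sq_le (by nlinarith)
    have hM : (mistakesE n (fun _ _ => false) P y T : ℝ) ≤ T := by
      exact_mod_cast mistakesE_le _ P y T
    linarith
  · have hT : 0 < (T : ℝ) := hL.trans hLT
    set ε := √(L / T)
    have hε₀ : 0 < ε := Real.sqrt_pos.2 (by positivity)
    have hε₁ : ε < 1 := (Real.sqrt_lt' one_pos).2 (by rw [one_pow]; exact (div_lt_one hT).2 hLT)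
    have hTε : T * ε ^ 2 = L := by
      rw [Real.sq_sqrt (by positivity)]
      field_simp
    refine ⟨learner n ε, fun P y hreal => ?_⟩
    have hM := mistakesE_learner_mul_le hε₀ hε₁ hreal
    have hM' : (mistakesE n (learner n ε) P y T : ℝ) ≤ 4 * (T * ε) := by
      refine le_of_mul_le_mul_right ?_ hε₀
      nlinarith [Real.log_le_logb_two hn'.le]
    rw [Real.mul_sqrt_div_self hT.le] at hM'
    linarith [Real.sqrt_nonneg (T * L)]

/-- For every `T ≥ 2` and `n ≥ 2` there is a deterministic apple tasting learner
(`RealizableExpAT` with `L = n`, `η = √(log₂ n / T)`) making at most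
`7√(T log₂ n) + 1` mistakes on every realizable sequence of length `T`. -/
theorem experts_realizable_upper_bound (n T : ℕ) (hn : 2 ≤ n) (hT : 2 ≤ T) :
    ∃ Lrn : ExpertLearner n, ∀ (P : ℕ → Fin n → Bool) (y : ℕ → Bool),
      (∃ j : Fin n, ∀ t < T, P t j = y t) →
      (mistakesE n Lrn P y T : ℝ) ≤ 7 * Real.sqrt (T * Real.logb 2 n) + 1 :=
  experts_realizable_upper_bound_general n T hn
end

section
/- For every 2 ≤ T ≤ n ≤ 2^T, every deterministic learner for prediction with n experts' advice under apple tasting feedback makes Ω(√(T log n)) mistakes on some realizable sequence of length T. -/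
/-!
The adversary answers every prediction `1` by revealing the label `0`; the true labels are only
fixed at the end, as the advice of one expert that predicted `0` in all those rounds, so the
learner's mistakes are exactly those rounds plus the rounds where it predicted `0` and that expert
predicted `1`.

Experts are split into blocks of `2 ^ (2 * D)`. Inside a block the adversary keeps a dyadic
interval of experts and lets its upper half predict `1`. If the learner predicts `1`, the upper
half is cut off; after `D` cuts the adversary moves to a fresh block. If the learner predicts `0`
for `h` rounds in a row, the adversary descends into the upper half. After `D` descents in one
block, the lowest expert of the interval has cost the learner `h * D` mistakes; after `N` blocks,
the first expert of the next, never used, block witnesses `D * N` mistakes. One of the two happens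
within `(2 * h + 1) * D * N` rounds. With `D ≈ log₂ n / 8` and `h = N ≈ √(T / (8 * D))` both
bounds are `Ω(√(T log n))`, and `T ≤ n` leaves room for the `N + 1` blocks.
-/

namespace AppleTasting

open Finset

structure Adversary (σ : Type) where
  init : σ
  present : σ → ℕ → Bool
  next : σ → Bool → σ

namespace Adversary

variable {σ : Type} (A : Adversary σ) {n : ℕ} (Lrn : ExpertLearner n)

def states (r : ℕ → Bool) : ℕ → σ
  | 0 => A.init
  | t + 1 => A.next (states r t) (r t)

def play : ℕ → σ × List ((Fin n → Bool) × Option Bool)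
  | 0 => (A.init, [])
  | t + 1 =>
    let s := (play t).1
    let H := (play t).2
    let v : Fin n → Bool := fun j => A.present s j
    (A.next s (Lrn H v), H ++ [(v, if Lrn H v then some false else none)])

def responses (t : ℕ) : Bool :=
  Lrn (A.play Lrn t).2 (fun j => A.present (A.play Lrn t).1 j)

def advice (t : ℕ) : Fin n → Bool :=
  fun j => A.present (A.states (A.responses Lrn) t) j

theorem play_fst (t : ℕ) : (A.play Lrn t).1 = A.states (A.responses Lrn) t := by
  induction t with
  | zero => rfl
  | succ t ih => simp only [play, states, responses, ih]

theorem responses_eq (t : ℕ) : A.responses Lrn t = Lrn (A.play Lrn t).2 (A.advice Lrn t) := by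
  simp only [responses, play_fst]
  rfl

theorem play_succ_snd (t : ℕ) :
    (A.play Lrn (t + 1)).2 =
      (A.play Lrn t).2 ++ [(A.advice Lrn t, if A.responses Lrn t then some false else none)] := by
  simp only [play, responses, play_fst]
  rfl

variable {A Lrn} {T : ℕ} {j : Fin n}

theorem histE_eq_play_snd (hj : ∀ t < T, A.responses Lrn t = true → A.advice Lrn t j = false)
    {t : ℕ} (ht : t ≤ T) :
    histE n Lrn (A.advice Lrn) (fun t => A.advice Lrn t j) t = (A.play Lrn t).2 := by
  induction t with
  | zero => rfl
  | succ t ih =>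
    rw [histE, ih (by omega), ← responses_eq A Lrn, play_succ_snd]
    cases hr : A.responses Lrn t
    · rfl
    · rw [hj t (by omega) hr]

theorem mistakesE_eq_card (hj : ∀ t < T, A.responses Lrn t = true → A.advice Lrn t j = false) :
    mistakesE n Lrn (A.advice Lrn) (fun t => A.advice Lrn t j) T =
      #{t ∈ range T | A.responses Lrn t = true ∨ A.advice Lrn t j = true} := by
  refine congrArg card (filter_congr fun t ht => ?_)
  have hjt := hj t (mem_range.1 ht)
  dsimp only
  rw [predE, histE_eq_play_snd hj (mem_range.1 ht).le, ← responses_eq A Lrn]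
  revert hjt
  cases A.responses Lrn t <;> cases A.advice Lrn t j <;> simp

end Adversary

theorem two_mul_pow_sub_succ {m k : ℕ} (hk : k < m) : 2 * 2 ^ (m - (k + 1)) = 2 ^ (m - k) := by
  rw [← pow_succ']
  congr 1
  omega

/-- Block `block` consists of the experts in `[block * 2 ^ (2 * D), (block + 1) * 2 ^ (2 * D))`.
The current interval `[lo, hi)` has been halved `depth` times by descending and `cuts` times by
cutting inside this block, and the learner has predicted `0` in the last `waits` rounds on it. -/
structure HalvingState where
  block : ℕ
  lo : ℕ
  depth : ℕ
  cuts : ℕ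
  waits : ℕ

namespace HalvingState

variable (D h N : ℕ) (s : HalvingState)

def Running : Prop := s.depth < D ∧ s.block < N

instance : Decidable (s.Running D N) := instDecidableAnd

def half : ℕ := 2 ^ (2 * D - 1 - (s.depth + s.cuts))

def mid : ℕ := s.lo + s.half D

def hi : ℕ := s.lo + 2 * s.half D

def Shows (x : ℕ) : Prop := s.Running D N ∧ s.mid D ≤ x ∧ x < s.hi D

instance (x : ℕ) : Decidable (s.Shows D N x) := instDecidableAnd

def IsCandidate (x : ℕ) : Prop := s.lo ≤ x ∧ x < s.hi D ∨ (s.block + 1) * 2 ^ (2 * D) ≤ x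

def next (r : Bool) : HalvingState :=
  if s.Running D N then
    if r then
      if s.cuts + 1 < D then { s with cuts := s.cuts + 1, waits := 0 }
      else ⟨s.block + 1, (s.block + 1) * 2 ^ (2 * D), 0, 0, 0⟩
    else if s.waits + 1 < h then { s with waits := s.waits + 1 }
    else { s with lo := s.mid D, depth := s.depth + 1, waits := 0 }
  else s

def Weighted (w : ℕ → ℕ) : Prop :=
  (∀ x, s.lo ≤ x → x < s.hi D → h * s.depth ≤ w x) ∧
    ∀ x, s.mid D ≤ x → x < s.hi D → h * s.depth + s.waits ≤ w x

def cutCount : ℕ := D * s.block + s.cuts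

def clock : ℕ := h * (D * s.block + s.depth) + (h + 1) * s.cutCount D + s.waits

structure WellFormed : Prop where
  waits_lt : s.waits < h
  cuts_lt : s.cuts < D
  block_le : s.block ≤ N
  hi_le : s.hi D ≤ (s.block + 1) * 2 ^ (2 * D)

variable {D h N s}

theorem two_mul_half_succ (hs : s.WellFormed D h N) (hrun : s.Running D N) {k : ℕ}
    (hk : k = s.depth + s.cuts + 1) : 2 * 2 ^ (2 * D - 1 - k) = s.half D := by
  have := hs.cuts_lt
  have := hrun.1
  rw [half, hk]
  exact two_mul_pow_sub_succ (by omega)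

theorem two_mul_half_of_fresh (hD : 1 ≤ D) (hdepth : s.depth = 0) (hcuts : s.cuts = 0) :
    2 * s.half D = 2 ^ (2 * D) := by
  rw [half, hdepth, hcuts, ← pow_succ']
  congr 1
  omega

theorem WellFormed.next (hs : s.WellFormed D h N) (r : Bool) :
    (s.next D h N r).WellFormed D h N := by
  have hw := hs.waits_lt
  have hc := hs.cuts_lt
  have hb := hs.block_le
  have hhi := hs.hi_le
  unfold HalvingState.next
  split_ifs with hrun hr hcut hwait
  · have := two_mul_half_succ hs hrun (k := s.depth + (s.cuts + 1)) (by omega)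
    refine ⟨?_, ?_, ?_, ?_⟩ <;> dsimp only [hi, half] at hhi this ⊢ <;> omega
  · have := two_mul_half_of_fresh (D := D)
      (s := ⟨s.block + 1, (s.block + 1) * 2 ^ (2 * D), 0, 0, 0⟩) (by omega) rfl rfl
    refine ⟨show 0 < h by omega, show 0 < D by omega, hrun.2, ?_⟩
    rw [hi, this]
    exact le_of_eq (by ring)
  · exact ⟨hwait, hc, hb, hhi⟩
  · have := two_mul_half_succ hs hrun (k := s.depth + 1 + s.cuts) (by omega)
    refine ⟨?_, ?_, ?_, ?_⟩ <;> dsimp only [hi, mid, half] at hhi this ⊢ <;> omega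
  · exact hs

theorem next_of_not_running (hrun : ¬ s.Running D N) (r : Bool) : s.next D h N r = s := by
  simp [HalvingState.next, hrun]

theorem Weighted.next {w w' : ℕ → ℕ} (hs : s.WellFormed D h N) (hw : s.Weighted D h w)
    (r : Bool) (hmono : ∀ x, w x ≤ w' x)
    (hshown : r = false → ∀ x, s.Shows D N x → w x + 1 ≤ w' x) :
    (s.next D h N r).Weighted D h w' := by
  obtain ⟨hnode, hupper⟩ := hw
  have := hs.waits_lt
  unfold HalvingState.next
  split_ifs with hrun hr hcut hwait
  · have := two_mul_half_succ hs hrun (k := s.depth + (s.cuts + 1)) (by omega)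
    refine ⟨fun x h1 h2 => ?_, fun x h1 h2 => ?_⟩ <;> dsimp only [hi, mid, half] at * <;>
      linarith [hnode x (by omega) (by omega), hmono x]
  · exact ⟨fun x _ _ => by simp, fun x _ _ => by simp⟩
  · refine ⟨fun x h1 h2 => (hnode x h1 h2).trans (hmono x), fun x h1 h2 => ?_⟩
    have := hshown (by simpa using hr) x ⟨hrun, h1, h2⟩
    dsimp only at *
    linarith [hupper x h1 h2]
  · have := two_mul_half_succ hs hrun (k := s.depth + 1 + s.cuts) (by omega)
    have hshow := hshown (by simpa using hr)
    refine ⟨fun x h1 h2 => ?_, fun x h1 h2 => ?_⟩ <;> dsimp only [hi, mid, half] at * <;>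
    · have := hupper x (by omega) (by omega)
      have := hshow x
        ⟨hrun, by dsimp only [hi, mid, half]; omega, by dsimp only [hi, mid, half]; omega⟩
      rw [mul_add]
      omega
  · exact ⟨fun x h1 h2 => (hnode x h1 h2).trans (hmono x),
      fun x h1 h2 => (hupper x h1 h2).trans (hmono x)⟩

theorem IsCandidate.of_next (hs : s.WellFormed D h N) {r : Bool} {x : ℕ}
    (hx : (s.next D h N r).IsCandidate D x) :
    s.IsCandidate D x ∧ (r = true → ¬ s.Shows D N x) := by
  have := hs.hi_le
  revert hx
  unfold HalvingState.next
  split_ifs with hrun hr hcut hwait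
  · have := two_mul_half_succ hs hrun (k := s.depth + (s.cuts + 1)) (by omega)
    intro hx
    refine ⟨?_, fun _ hsh => ?_⟩ <;> simp only [IsCandidate, Shows, hi, mid, half] at * <;>
      omega
  · have hW : (s.block + 1 + 1) * 2 ^ (2 * D) = (s.block + 1) * 2 ^ (2 * D) + 2 ^ (2 * D) := by
      ring
    have := Nat.one_le_two_pow (n := 2 * D)
    intro hx
    refine ⟨?_, fun _ hsh => ?_⟩ <;> simp only [IsCandidate, Shows, hi, mid, half] at * <;>
      omega
  · intro hx
    exact ⟨hx, by simp [hr]⟩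
  · have := two_mul_half_succ hs hrun (k := s.depth + 1 + s.cuts) (by omega)
    intro hx
    refine ⟨?_, by simp [hr]⟩
    simp only [IsCandidate, hi, mid, half] at *
    omega
  · intro hx
    exact ⟨hx, fun _ hsh => hrun hsh.1⟩

theorem cutCount_next_le (hs : s.WellFormed D h N) (r : Bool) :
    (s.next D h N r).cutCount D ≤ s.cutCount D + r.toNat := by
  have := hs.cuts_lt
  unfold HalvingState.next cutCount
  split_ifs with hrun hr hcut hwait
  · simp only [hr, Bool.toNat_true]; omega
  · simp only [hr, Bool.toNat_true]; rw [mul_add]; omega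
  · simp only [hr]; omega
  · simp only [hr]; omega
  · omega

theorem clock_lt_next (hs : s.WellFormed D h N) (hrun : s.Running D N) (r : Bool) :
    s.clock D h < (s.next D h N r).clock D h := by
  have := hs.waits_lt
  have := hs.cuts_lt
  have := hrun.1
  unfold HalvingState.next clock cutCount
  split_ifs with hr hcut hwait <;> dsimp only
  · nlinarith
  · nlinarith
  · omega
  · nlinarith

theorem clock_lt (hs : s.WellFormed D h N) (hrun : s.Running D N) :
    s.clock D h < (2 * h + 1) * D * N := by
  have := hs.waits_lt
  have := hs.cuts_lt
  have hblock : D * s.block + D ≤ D * N := by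
    rw [← Nat.mul_succ]; exact Nat.mul_le_mul_left D hrun.2
  have := hrun.1
  unfold clock cutCount
  nlinarith

end HalvingState

open HalvingState

def halving (D h N : ℕ) : Adversary HalvingState where
  init := ⟨0, 0, 0, 0, 0⟩
  present s x := decide (s.Shows D N x)
  next s r := s.next D h N r

section Trajectory

variable {D h N : ℕ} (r : ℕ → Bool)

theorem halving_states_succ (t : ℕ) :
    (halving D h N).states r (t + 1) = ((halving D h N).states r t).next D h N (r t) :=
  rfl

theorem wellFormed_states (hD : 1 ≤ D) (hh : 1 ≤ h) (t : ℕ) :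
    ((halving D h N).states r t).WellFormed D h N := by
  induction t with
  | zero =>
    refine ⟨hh, hD, Nat.zero_le _, ?_⟩
    rw [hi, two_mul_half_of_fresh hD rfl rfl]
    simp [halving, Adversary.states]
  | succ t ih => exact ih.next (r t)

theorem weighted_states (hD : 1 ≤ D) (hh : 1 ≤ h) (t : ℕ) :
    ((halving D h N).states r t).Weighted D h
      fun x => Nat.count (fun u => r u = false ∧ ((halving D h N).states r u).Shows D N x) t := by
  induction t with
  | zero =>
    exact ⟨fun _ _ _ => by simp [halving, Adversary.states],
      fun _ _ _ => by simp [halving, Adversary.states]⟩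
  | succ t ih =>
    refine (ih.next (wellFormed_states r hD hh t) (r t) (fun x => ?_) fun hr x hx => ?_)
    · rw [Nat.count_succ]; omega
    · rw [Nat.count_succ, if_pos ⟨hr, hx⟩]

theorem not_shows_of_isCandidate (hD : 1 ≤ D) (hh : 1 ≤ h) {t x : ℕ}
    (hx : ((halving D h N).states r t).IsCandidate D x) :
    ∀ u < t, r u = true → ¬ ((halving D h N).states r u).Shows D N x := by
  induction t with
  | zero => intro u hu; omega
  | succ t ih =>
    obtain ⟨hx, hnew⟩ := IsCandidate.of_next (wellFormed_states r hD hh t) hx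
    intro u hu
    rcases Nat.lt_succ_iff_lt_or_eq.1 hu with hu | rfl
    · exact ih hx u hu
    · exact hnew

theorem cutCount_states_le (hD : 1 ≤ D) (hh : 1 ≤ h) (t : ℕ) :
    ((halving D h N).states r t).cutCount D ≤ Nat.count (fun u => r u = true) t := by
  induction t with
  | zero => rfl
  | succ t ih =>
    have := cutCount_next_le (wellFormed_states (N := N) r hD hh t) (r t)
    rw [Nat.count_succ, halving_states_succ]
    cases hr : r t <;> simp_all <;> omega

theorem le_clock_of_running (hD : 1 ≤ D) (hh : 1 ≤ h) {t : ℕ}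
    (hrun : ((halving D h N).states r t).Running D N) :
    t ≤ ((halving D h N).states r t).clock D h := by
  induction t with
  | zero => exact Nat.zero_le _
  | succ t ih =>
    have hs := wellFormed_states r hD hh t (N := N)
    by_cases hprev : ((halving D h N).states r t).Running D N
    · exact (ih hprev).trans_lt (clock_lt_next hs hprev (r t))
    · exact absurd hrun (by rwa [halving_states_succ, next_of_not_running hprev])

theorem exists_expert_avoiding_cuts (hD : 1 ≤ D) (hh : 1 ≤ h) {T : ℕ}
    (hT : (2 * h + 1) * D * N ≤ T) :
    ∃ x < (N + 1) * 2 ^ (2 * D),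
      (∀ t < T, r t = true → ¬ ((halving D h N).states r t).Shows D N x) ∧
      D * min h N ≤
        #{t ∈ range T | r t = true ∨ ((halving D h N).states r t).Shows D N x} := by
  set s := (halving D h N).states r T
  have hs : s.WellFormed D h N := wellFormed_states r hD hh T
  have hstop : ¬ s.Running D N := fun hrun =>
    absurd ((le_clock_of_running r hD hh hrun).trans_lt (clock_lt hs hrun)) (by omega)
  have hlo : s.lo < s.hi D := by
    have := Nat.one_le_two_pow (n := 2 * D - 1 - (s.depth + s.cuts))
    rw [hi, half]; omega
  have hblock : (s.block + 1) * 2 ^ (2 * D) ≤ (N + 1) * 2 ^ (2 * D) :=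
    Nat.mul_le_mul_right _ (by have := hs.block_le; omega)
  refine ⟨s.lo, by have := hs.hi_le; omega,
    not_shows_of_isCandidate r hD hh (Or.inl ⟨le_rfl, hlo⟩), ?_⟩
  rw [← Nat.count_eq_card_filter_range]
  unfold Running at hstop
  by_cases hdepth : D ≤ s.depth
  · calc D * min h N ≤ h * s.depth := by
          rw [mul_comm]; exact Nat.mul_le_mul (min_le_left _ _) hdepth
      _ ≤ Nat.count (fun u => r u = false ∧ ((halving D h N).states r u).Shows D N s.lo) T :=
          (weighted_states r hD hh T).1 s.lo le_rfl hlo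
      _ ≤ _ := Nat.count_mono_left fun u _ hu => Or.inr hu.2
  · calc D * min h N ≤ s.cutCount D := by
          unfold cutCount
          have := Nat.mul_le_mul_left D (show min h N ≤ s.block by omega)
          omega
      _ ≤ Nat.count (fun u => r u = true) T := cutCount_states_le r hD hh T
      _ ≤ _ := Nat.count_mono_left fun u _ hu => Or.inl hu

end Trajectory

def ForcesMistakes (n T : ℕ) (Lrn : ExpertLearner n) (m : ℕ) : Prop :=
  ∃ (P : ℕ → Fin n → Bool) (y : ℕ → Bool),
    (∃ j : Fin n, ∀ t < T, P t j = y t) ∧ m ≤ mistakesE n Lrn P y T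

theorem forcesMistakes_one {n T : ℕ} (hn : 2 ≤ n) (hT : 1 ≤ T) (Lrn : ExpertLearner n) :
    ForcesMistakes n T Lrn 1 := by
  let P : ℕ → Fin n → Bool := fun _ j => decide ((j : ℕ) = 1)
  let j : Fin n := if Lrn [] (P 0) then ⟨0, by omega⟩ else ⟨1, hn⟩
  refine ⟨P, fun t => P t j, ⟨j, fun _ _ => rfl⟩,
    one_le_card.2 ⟨0, mem_filter.2 ⟨mem_range.2 hT, ?_⟩⟩⟩
  show Lrn [] (P 0) ≠ P 0 j
  by_cases hr : Lrn [] (P 0) = true <;> simp [j, hr, P]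

theorem forcesMistakes_halving {n D h N T : ℕ} (hD : 1 ≤ D) (hh : 1 ≤ h)
    (hT : (2 * h + 1) * D * N ≤ T) (hn : (N + 1) * 2 ^ (2 * D) ≤ n) (Lrn : ExpertLearner n) :
    ForcesMistakes n T Lrn (D * min h N) := by
  let A := halving D h N
  obtain ⟨x, hxn, havoid, hcount⟩ := exists_expert_avoiding_cuts (A.responses Lrn) hD hh hT
  let j : Fin n := ⟨x, by omega⟩
  have hshows : ∀ t, A.advice Lrn t j = true ↔ (A.states (A.responses Lrn) t).Shows D N x := by
    simp [A, Adversary.advice, halving, j]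
  refine ⟨A.advice Lrn, fun t => A.advice Lrn t j, ⟨j, fun _ _ => rfl⟩, ?_⟩
  rw [Adversary.mistakesE_eq_card fun t ht hr =>
    Bool.eq_false_iff.2 fun hj => havoid t ht hr ((hshows t).1 hj)]
  simpa only [hshows] using hcount

theorem exists_halving_params {n T : ℕ} (hTn : T ≤ n) (hnT : n ≤ 2 ^ T)
    (hk : 8 ≤ Nat.log 2 n) :
    ∃ D m, 1 ≤ D ∧ 1 ≤ m ∧ (2 * m + 1) * D * m ≤ T ∧ (m + 1) * 2 ^ (2 * D) ≤ n ∧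
      T * (Nat.log 2 n + 1) ≤ 512 * (D * m) ^ 2 := by
  set k := Nat.log 2 n
  have hkT : k ≤ T := by
    simpa [Nat.log_pow] using Nat.log_mono_right (b := 2) hnT
  have hkn : 2 ^ k ≤ n := Nat.pow_log_le_self 2 (by omega)
  set D := k / 8
  set q := T / (8 * D)
  set m := Nat.sqrt q
  have hD : 1 ≤ D := by omega
  have hq8 : q * (8 * D) ≤ T := Nat.div_mul_le_self T (8 * D)
  have hTq : T < (q + 1) * (8 * D) := (Nat.div_lt_iff_lt_mul (by omega)).1 (Nat.lt_succ_self q)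
  have hm : 1 ≤ m := Nat.sqrt_pos.2 ((Nat.one_le_div_iff (by omega)).2 (by omega))
  have hmsq : m * m ≤ q := Nat.sqrt_le q
  have hqm : q < (m + 1) * (m + 1) := Nat.lt_succ_sqrt q
  have hm4 : (m + 1) * (m + 1) ≤ 4 * (m * m) := by nlinarith
  refine ⟨D, m, hD, hm, by nlinarith, ?_, ?_⟩
  · have hm1 : (m + 1) * (m + 1) ≤ n := by nlinarith
    have hpow : 2 ^ (2 * D) * 2 ^ (2 * D) ≤ n := by
      rw [← pow_add]
      exact (Nat.pow_le_pow_right two_pos (by omega)).trans hkn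
    refine Nat.mul_self_le_mul_self_iff.1 ?_
    calc (m + 1) * 2 ^ (2 * D) * ((m + 1) * 2 ^ (2 * D))
        = (m + 1) * (m + 1) * (2 ^ (2 * D) * 2 ^ (2 * D)) := by ring
      _ ≤ n * n := Nat.mul_le_mul hm1 hpow
  · have hk16 : k + 1 ≤ 16 * D := by omega
    have hT32 : T ≤ 32 * D * (m * m) := by nlinarith
    calc T * (k + 1) ≤ 32 * D * (m * m) * (16 * D) := Nat.mul_le_mul hT32 hk16
      _ = 512 * (D * m) ^ 2 := by ring

theorem exists_forcesMistakes {n T : ℕ} (hT : 2 ≤ T) (hTn : T ≤ n) (hnT : n ≤ 2 ^ T)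
    (Lrn : ExpertLearner n) :
    ∃ m, T * (Nat.log 2 n + 1) ≤ 4096 * m ^ 2 ∧ ForcesMistakes n T Lrn m := by
  by_cases hk : 8 ≤ Nat.log 2 n
  · obtain ⟨D, m, hD, hm, htime, hsupply, hbound⟩ := exists_halving_params hTn hnT hk
    refine ⟨D * m, by omega, ?_⟩
    simpa using forcesMistakes_halving hD hm htime hsupply Lrn
  · have hn : n < 2 ^ 8 := Nat.lt_pow_of_log_lt one_lt_two (by omega)
    refine ⟨1, ?_, forcesMistakes_one (by omega) (by omega) Lrn⟩
    have : T * (Nat.log 2 n + 1) ≤ 255 * 8 := Nat.mul_le_mul (by omega) (by omega)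
    omega

theorem log_le_natLog_add_one (n : ℕ) : Real.log n ≤ Nat.log 2 n + 1 := by
  rcases Nat.eq_zero_or_pos n with rfl | hn
  · simp
  have hpow : (n : ℝ) ≤ 2 ^ (Nat.log 2 n + 1) := by
    exact_mod_cast (Nat.lt_pow_succ_log_self one_lt_two n).le
  have hlog2 : Real.log 2 ≤ 1 := by
    linarith [Real.log_le_sub_one_of_pos (zero_lt_two' ℝ)]
  calc Real.log n ≤ Real.log (2 ^ (Nat.log 2 n + 1)) := Real.log_le_log (by positivity) hpow
    _ = (Nat.log 2 n + 1 : ℕ) * Real.log 2 := by rw [Real.log_pow]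
    _ ≤ Nat.log 2 n + 1 := by push_cast; nlinarith

end AppleTasting

/-- Realizable lower bound: for every `2 ≤ T ≤ n ≤ 2^T`, every deterministic apple
tasting learner makes `Ω(√(T log n))` mistakes on some realizable sequence of length `T`. -/
theorem experts_realizable_lower_bound :
    ∃ c : ℝ, 0 < c ∧
      ∀ n T : ℕ, 2 ≤ T → T ≤ n → n ≤ 2 ^ T →
        ∀ Lrn : ExpertLearner n, ∃ (P : ℕ → Fin n → Bool) (y : ℕ → Bool),
          (∃ j : Fin n, ∀ t < T, P t j = y t) ∧
          c * Real.sqrt (T * Real.log n) ≤ (mistakesE n Lrn P y T : ℝ) := by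
  refine ⟨1 / 64, by norm_num, fun n T hT hTn hnT Lrn => ?_⟩
  obtain ⟨m, hm, P, y, hreal, hmistakes⟩ := AppleTasting.exists_forcesMistakes hT hTn hnT Lrn
  refine ⟨P, y, hreal, ?_⟩
  have hlog : (T : ℝ) * Real.log n ≤ T * (Nat.log 2 n + 1) :=
    mul_le_mul_of_nonneg_left (AppleTasting.log_le_natLog_add_one n) (Nat.cast_nonneg T)
  have hm' : (T : ℝ) * (Nat.log 2 n + 1) ≤ (64 * m) ^ 2 := by
    exact_mod_cast hm.trans_eq (by ring)
  have hsqrt : Real.sqrt (T * Real.log n) ≤ 64 * m :=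
    Real.sqrt_le_iff.2 ⟨by positivity, hlog.trans hm'⟩
  have : (m : ℝ) ≤ mistakesE n Lrn P y T := by exact_mod_cast hmistakes
  linarith
end

section
/- For every 2 ≤ T ≤ n, k ≥ 1 with √(T/k) ∈ ℕ, every deterministic learner for prediction with n experts' advice under apple tasting feedback makes at least √(Tk) mistakes on some k-realizable sequence of length T. -/
/-!
Split the rounds into `m` phases of length `L = k m` and let expert `i` predict `1` exactly in
phase `i`. Run the learner against the all-zero labels. Since it sees a label only when it
predicts `1`, relabelling rounds where it predicted `0` leaves all its predictions unchanged. If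
in some phase `i` it predicts `1` fewer than `k` times, label `1` exactly the rounds of phase
`i` where it predicted `0`: the learner errs on all `k m` rounds of that phase, while expert `i`
errs only where the learner predicted `1`. Otherwise it predicts `1` at least `k` times in each
of the `m` phases, so the all-zero labels cost it `k m` mistakes, while expert `m`, which never
predicts `1` in the first `T = k m²` rounds, makes none.
-/

open Finset

section Feedback

variable {n : ℕ} (Lrn : ExpertLearner n) (P : ℕ → Fin n → Bool)

theorem histE_congr {y y' : ℕ → Bool} (h : ∀ t, predE n Lrn P y' t = true → y t = y' t) :
    ∀ t, histE n Lrn P y t = histE n Lrn P y' t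
  | 0 => rfl
  | t + 1 => by
    rw [histE, histE, histE_congr h t]
    split_ifs with hpred
    · rw [h t hpred]
    · rfl

theorem predE_congr {y y' : ℕ → Bool} (h : ∀ t, predE n Lrn P y' t = true → y t = y' t)
    (t : ℕ) : predE n Lrn P y t = predE n Lrn P y' t := by
  rw [predE, predE, histE_congr Lrn P h]

theorem mistakesE_const_false (T : ℕ) :
    mistakesE n Lrn P (fun _ => false) T =
      #{t ∈ range T | predE n Lrn P (fun _ => false) t = true} := by
  simp only [mistakesE, ne_eq, Bool.not_eq_false]

end Feedback

theorem lt_mul_mul_self_of_two_le {k m : ℕ} (h : 2 ≤ k * m * m) : m < k * m * m := by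
  obtain hm | hm := Nat.lt_or_ge m 2
  · interval_cases m <;> omega
  · have hk : 0 < k := Nat.pos_of_ne_zero (by rintro rfl; simp at h)
    calc m < m * m := Nat.lt_mul_self_iff.2 hm
      _ ≤ k * (m * m) := Nat.le_mul_of_pos_left _ hk
      _ = k * m * m := (mul_assoc ..).symm

section Phases

variable {L m : ℕ}

theorem card_filter_range_mul_div_eq {i : ℕ} (hi : i < m) :
    #{t ∈ range (L * m) | t / L = i} = L := by
  rcases L.eq_zero_or_pos with rfl | hL
  · simp
  have hend : i * L + L ≤ L * m := by nlinarith
  have hphase : {t ∈ range (L * m) | t / L = i} = Ico (i * L) (i * L + L) := by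
    ext t
    simp only [mem_filter, mem_range, mem_Ico, Nat.div_eq_iff hL]
    omega
  rw [hphase, Nat.card_Ico, Nat.add_sub_cancel_left]

theorem mul_le_card_filter_of_le_card_phase {k : ℕ} {q : ℕ → Prop} [DecidablePred q]
    (h : ∀ i < m, k ≤ #{t ∈ range (L * m) | t / L = i ∧ q t}) :
    k * m ≤ #{t ∈ range (L * m) | q t} := by
  have hmaps : ∀ t ∈ {t ∈ range (L * m) | q t}, t / L ∈ range m := fun t ht =>
    mem_range.2 (Nat.div_lt_of_lt_mul (mem_range.1 (mem_filter.1 ht).1))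
  have := mul_card_image_le_card_of_maps_to hmaps k fun i hi => by
    rw [filter_filter]
    simpa only [and_comm] using h i (mem_range.1 hi)
  rwa [card_range] at this

end Phases

def phaseExperts (n L : ℕ) : ℕ → Fin n → Bool := fun t j => decide ((j : ℕ) = t / L)

section Adversary

variable {n : ℕ} (Lrn : ExpertLearner n) {L m k : ℕ}

theorem exists_labels_of_sparse_phase (j : Fin n) (hj : (j : ℕ) < m)
    (hsparse : #{t ∈ range (L * m) |
      t / L = j ∧ predE n Lrn (phaseExperts n L) (fun _ => false) t = true} ≤ k) :
    ∃ y : ℕ → Bool, #{t ∈ range (L * m) | phaseExperts n L t j ≠ y t} ≤ k ∧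
      L ≤ mistakesE n Lrn (phaseExperts n L) y (L * m) := by
  set p := predE n Lrn (phaseExperts n L) (fun _ => false)
  set y : ℕ → Bool := fun t => decide (t / L = j) && !p t
  have hpred : ∀ t, predE n Lrn (phaseExperts n L) y t = p t :=
    predE_congr Lrn _ fun t ht => by simp [y, p, ht]
  refine ⟨y, le_trans (card_le_card ?_) hsparse, ?_⟩
  · intro t ht
    obtain ⟨ht, hne⟩ := mem_filter.1 ht
    refine mem_filter.2 ⟨ht, ?_⟩
    have hphase : t / L = j := by
      by_contra hphase
      exact hne (by simp [phaseExperts, y, hphase, Ne.symm hphase])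
    refine ⟨hphase, ?_⟩
    by_contra hp
    exact hne (by simp [phaseExperts, y, hphase, hp])
  · calc L = #{t ∈ range (L * m) | t / L = j} := (card_filter_range_mul_div_eq hj).symm
      _ ≤ mistakesE n Lrn (phaseExperts n L) y (L * m) := card_le_card fun t ht => by
        obtain ⟨ht, hphase⟩ := mem_filter.1 ht
        refine mem_filter.2 ⟨ht, ?_⟩
        cases hp : p t <;> simp [hpred, y, hphase, hp]

theorem exists_labels_of_dense_phases (j : Fin n) (hj : m ≤ j)
    (hdense : ∀ i < m, k ≤ #{t ∈ range (L * m) |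
      t / L = i ∧ predE n Lrn (phaseExperts n L) (fun _ => false) t = true}) :
    ∃ y : ℕ → Bool, #{t ∈ range (L * m) | phaseExperts n L t j ≠ y t} = 0 ∧
      k * m ≤ mistakesE n Lrn (phaseExperts n L) y (L * m) := by
  refine ⟨fun _ => false, card_eq_zero.2 (filter_eq_empty_iff.2 fun t ht => ?_), ?_⟩
  · have hphase : t / L < j := (Nat.div_lt_of_lt_mul (mem_range.1 ht)).trans_le hj
    simp [phaseExperts, hphase.ne']
  · rw [mistakesE_const_false]
    exact mul_le_card_filter_of_le_card_phase hdense

end Adversary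

theorem experts_agnostic_lower_bound_general (n T k m : ℕ)
    (hT : 2 ≤ T) (hn : T ≤ n) (hm : T = k * m ^ 2) :
    ∀ Lrn : ExpertLearner n, ∃ (P : ℕ → Fin n → Bool) (y : ℕ → Bool),
      (∃ j : Fin n, ((Finset.range T).filter (fun t => P t j ≠ y t)).card ≤ k) ∧
      k * m ≤ mistakesE n Lrn P y T := by
  intro Lrn
  obtain rfl : T = k * m * m := by rw [hm]; ring
  have hmn : m < n := (lt_mul_mul_self_of_two_le hT).trans_le hn
  by_cases hsparse : ∃ i < m, #{t ∈ range (k * m * m) |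
      t / (k * m) = i ∧ predE n Lrn (phaseExperts n (k * m)) (fun _ => false) t = true} ≤ k
  · obtain ⟨i, him, hi⟩ := hsparse
    obtain ⟨y, hreal, hmist⟩ := exists_labels_of_sparse_phase Lrn ⟨i, him.trans hmn⟩ him hi
    exact ⟨_, y, ⟨_, hreal⟩, hmist⟩
  · push Not at hsparse
    obtain ⟨y, hreal, hmist⟩ :=
      exists_labels_of_dense_phases Lrn ⟨m, hmn⟩ le_rfl fun i hi => (hsparse i hi).le
    exact ⟨_, y, ⟨_, hreal.trans_le k.zero_le⟩, hmist⟩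

/-- Agnostic lower bound: for `2 ≤ T ≤ n`, `k ≥ 1` with `√(T/k) ∈ ℕ` (i.e. `T = k·m²`),
every deterministic apple tasting learner makes at least `√(Tk) = k·m` mistakes on some
`k`-realizable sequence of length `T`. -/
theorem experts_agnostic_lower_bound (n T k m : ℕ)
    (hT : 2 ≤ T) (hn : T ≤ n) (hk : 1 ≤ k) (hm : T = k * m ^ 2) :
    ∀ Lrn : ExpertLearner n, ∃ (P : ℕ → Fin n → Bool) (y : ℕ → Bool),
      (∃ j : Fin n, ((Finset.range T).filter (fun t => P t j ≠ y t)).card ≤ k) ∧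
      k * m ≤ mistakesE n Lrn P y T :=
  experts_agnostic_lower_bound_general n T k m hT hn hm
end

section
/- If distinct branches of a decision tree T pairwise disagree on at least one instance, and H is a random class of independent identically distributed random hypotheses, then for any set B' of branches, the probability that all branches in B' are realized by H is at most the product over b ∈ B' of the probability that b is realized by H (negative correlation of branch-realization events). -/
/-- Probability weight of a class `f` of `n` hypotheses over `m` instances, each
prediction drawn independently as Bernoulli(`p`). -/
def bernWeight (n m : ℕ) (p : ℝ) (f : Fin n → Fin m → Bool) : ℝ :=
  ∏ i : Fin n, ∏ t : Fin m, (if f i t = true then p else 1 - p)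

/-- A branch (a partial labeling of the instances) is realized by the class `f` if some
hypothesis of `f` agrees with all its labels. -/
def Realizes {n m : ℕ} (f : Fin n → Fin m → Bool) (b : Fin m → Option Bool) : Prop :=
  ∃ i : Fin n, ∀ (t : Fin m) (y : Bool), b t = some y → f i t = y

open Classical


section Aux
variable {α : Type*} [Fintype α]

lemma sum_pi_prod (n : ℕ) (ν : α → ℝ) :
    (∑ f : Fin n → α, ∏ i, ν (f i)) = (∑ x : α, ν x) ^ n := by
  classical
  rw [← Fin.prod_const n (∑ x : α, ν x),
    Finset.prod_univ_sum (fun _ : Fin n => (Finset.univ : Finset α)) (fun _ x => ν x),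
    Fintype.piFinset_univ]

lemma sum_fun_succ (n : ℕ) (F : (Fin (n+1) → α) → ℝ) :
    ∑ f : Fin (n+1) → α, F f = ∑ x : α, ∑ g : Fin n → α, F (Fin.cons (α := fun _ => α) x g) := by
  have h := Equiv.sum_comp (Fin.consEquiv (fun _ => α)) F
  rw [← h, Fintype.sum_prod_type]
  rfl

lemma single_realize (μ : α → ℝ) (hμ1 : ∑ x : α, μ x = 1) (n : ℕ) (E : α → Prop) :
    (∑ f : Fin n → α, if (∃ i, E (f i)) then ∏ i, μ (f i) else 0)
      = 1 - (1 - ∑ x : α, if E x then μ x else 0) ^ n := by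
  have key : ∀ f : Fin n → α, (if (∃ i, E (f i)) then ∏ i, μ (f i) else 0)
      = (∏ i, μ (f i)) - ∏ i, (if E (f i) then 0 else μ (f i)) := by
    intro f
    by_cases h : ∃ i, E (f i)
    · rw [if_pos h]
      obtain ⟨i, hi⟩ := h
      have hz : (∏ i, (if E (f i) then (0:ℝ) else μ (f i))) = 0 :=
        Finset.prod_eq_zero (Finset.mem_univ i) (if_pos hi)
      rw [hz]; ring
    · rw [if_neg h]; push_neg at h
      rw [Finset.prod_congr rfl (fun i _ => if_neg (h i))]
      ring
  rw [Finset.sum_congr rfl (fun f _ => key f), Finset.sum_sub_distrib,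
    sum_pi_prod n μ, sum_pi_prod n (fun y => if E y then (0:ℝ) else μ y), hμ1, one_pow]
  congr 2
  have : ∀ x : α, (if E x then (0:ℝ) else μ x) = μ x - (if E x then μ x else 0) := by
    intro x; by_cases h : E x <;> simp [h]
  rw [Finset.sum_congr rfl (fun x _ => this x), Finset.sum_sub_distrib, hμ1]

lemma main_key {β : Type*} (μ : α → ℝ) (hμ0 : ∀ x, 0 ≤ μ x) (hμ1 : ∑ x : α, μ x = 1) :
    ∀ (n : ℕ) (B : Finset β) (E : β → α → Prop),
    (∀ b ∈ B, ∀ b' ∈ B, b ≠ b' → ∀ x, E b x → E b' x → False) →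
    (∑ f : Fin n → α, if (∀ b ∈ B, ∃ i, E b (f i)) then ∏ i, μ (f i) else 0)
      ≤ ∏ b ∈ B, (1 - (1 - ∑ x : α, if E b x then μ x else 0) ^ n) := by
  classical
  intro n
  induction n with
  | zero =>
    intro B E hdisj
    rcases B.eq_empty_or_nonempty with h | ⟨b₀, hb₀⟩
    · subst h; simp
    · have h1 : ∀ f : Fin 0 → α, ¬ (∀ b ∈ B, ∃ i : Fin 0, E b (f i)) := by
        intro f h
        obtain ⟨i, _⟩ := h b₀ hb₀
        exact i.elim0
      rw [Finset.sum_congr rfl (fun f _ => if_neg (h1 f)), Finset.sum_const, smul_zero,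
        Finset.prod_eq_zero hb₀ (by simp)]
  | succ n IH =>
    intro B E hdisj
    set q : β → ℝ := fun b => ∑ x : α, if E b x then μ x else 0 with hq
    set a : β → ℝ := fun b => (1 - q b) ^ n with ha
    have hq0 : ∀ b, 0 ≤ q b := fun b =>
      Finset.sum_nonneg (fun x _ => by by_cases h : E b x <;> simp [h, hμ0 x])
    have hq1 : ∀ b, q b ≤ 1 := fun b => by
      rw [← hμ1]
      exact Finset.sum_le_sum (fun x _ => by by_cases h : E b x <;> simp [h, hμ0 x])
    have ha0 : ∀ b, 0 ≤ a b := fun b => pow_nonneg (by linarith [hq1 b]) n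
    have ha1 : ∀ b, a b ≤ 1 := fun b => pow_le_one₀ (by linarith [hq1 b]) (by linarith [hq0 b])
    -- step 1 : split off the last hypothesis
    rw [sum_fun_succ n (fun f => if (∀ b ∈ B, ∃ i, E b (f i)) then ∏ i, μ (f i) else 0)]
    -- step 2 : per-x bound
    have step : ∀ x : α,
        (∑ g : Fin n → α, if (∀ b ∈ B, ∃ i, E b (Fin.cons (α := fun _ => α) x g i)) then ∏ i, μ (Fin.cons (α := fun _ => α) x g i) else 0)
          ≤ μ x * ∏ b ∈ B, (if E b x then 1 else 1 - a b) := by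
      intro x
      have hc : ∀ g : Fin n → α,
          (if (∀ b ∈ B, ∃ i, E b (Fin.cons (α := fun _ => α) x g i)) then ∏ i, μ (Fin.cons (α := fun _ => α) x g i) else 0)
            ≤ μ x * (if (∀ b ∈ B.filter (fun b => ¬ E b x), ∃ i, E b (g i)) then ∏ i, μ (g i) else 0) := by
        intro g
        have hW : (∏ i, μ (Fin.cons (α := fun _ => α) x g i)) = μ x * ∏ i, μ (g i) := by
          rw [Fin.prod_univ_succ]; simp
        by_cases h : ∀ b ∈ B, ∃ i, E b (Fin.cons (α := fun _ => α) x g i)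
        · rw [if_pos h, hW]
          have h' : ∀ b ∈ B.filter (fun b => ¬ E b x), ∃ i, E b (g i) := by
            intro b hb
            rw [Finset.mem_filter] at hb
            obtain ⟨i, hi⟩ := h b hb.1
            rcases (Fin.exists_fin_succ (P := fun i => E b (Fin.cons (α := fun _ => α) x g i))).1 ⟨i, hi⟩ with h0 | ⟨j, hj⟩
            · exact absurd (by simpa using h0) hb.2
            · exact ⟨j, by simpa using hj⟩
          rw [if_pos h']
        · rw [if_neg h]
          by_cases h' : ∀ b ∈ B.filter (fun b => ¬ E b x), ∃ i, E b (g i)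
          · rw [if_pos h']
            exact mul_nonneg (hμ0 x) (Finset.prod_nonneg (fun i _ => hμ0 _))
          · rw [if_neg h', mul_zero]
      calc (∑ g : Fin n → α, if (∀ b ∈ B, ∃ i, E b (Fin.cons (α := fun _ => α) x g i)) then ∏ i, μ (Fin.cons (α := fun _ => α) x g i) else 0)
          ≤ ∑ g : Fin n → α, μ x * (if (∀ b ∈ B.filter (fun b => ¬ E b x), ∃ i, E b (g i)) then ∏ i, μ (g i) else 0) :=
            Finset.sum_le_sum (fun g _ => hc g)
        _ = μ x * ∑ g : Fin n → α, (if (∀ b ∈ B.filter (fun b => ¬ E b x), ∃ i, E b (g i)) then ∏ i, μ (g i) else 0) := by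
            rw [Finset.mul_sum]
        _ ≤ μ x * ∏ b ∈ B.filter (fun b => ¬ E b x), (1 - (1 - q b) ^ n) := by
            apply mul_le_mul_of_nonneg_left _ (hμ0 x)
            apply IH
            intro b hb b' hb' hne y
            rw [Finset.mem_filter] at hb hb'
            exact hdisj b hb.1 b' hb'.1 hne y
        _ = μ x * ∏ b ∈ B, (if E b x then 1 else 1 - a b) := by
            congr 1
            rw [Finset.prod_filter]
            apply Finset.prod_congr rfl
            intro b _
            by_cases h : E b x <;> simp [h, ha]
    -- step 3 : pointwise product bound
    have point : ∀ x : α, (∏ b ∈ B, (if E b x then 1 else 1 - a b))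
        ≤ (∏ b ∈ B, (1 - a b)) + ∑ b ∈ B, (if E b x then a b * ∏ c ∈ B.erase b, (1 - a c) else 0) := by
      intro x
      by_cases hx : ∃ b₀ ∈ B, E b₀ x
      · obtain ⟨b₀, hb₀, hE⟩ := hx
        have hprod : (∏ b ∈ B, (if E b x then 1 else 1 - a b)) = ∏ c ∈ B.erase b₀, (1 - a c) := by
          rw [← Finset.mul_prod_erase B _ hb₀, if_pos hE, one_mul]
          refine Finset.prod_congr rfl (fun b hb => ?_)
          rw [Finset.mem_erase] at hb
          refine if_neg (fun hEb => hdisj b hb.2 b₀ hb₀ hb.1 x hEb hE)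
        have hsum : a b₀ * ∏ c ∈ B.erase b₀, (1 - a c)
            ≤ ∑ b ∈ B, (if E b x then a b * ∏ c ∈ B.erase b, (1 - a c) else 0) := by
          have h0 : ∀ b ∈ B, (0:ℝ) ≤ (if E b x then a b * ∏ c ∈ B.erase b, (1 - a c) else 0) := by
            intro b _
            by_cases h : E b x
            · rw [if_pos h]
              exact mul_nonneg (ha0 b) (Finset.prod_nonneg (fun c _ => by linarith [ha1 c]))
            · rw [if_neg h]
          have := Finset.single_le_sum h0 hb₀
          rwa [if_pos hE] at this
        have hsplit : (∏ b ∈ B, (1 - a b)) = (1 - a b₀) * ∏ c ∈ B.erase b₀, (1 - a c) :=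
          (Finset.mul_prod_erase B _ hb₀).symm
        rw [hprod, hsplit]
        nlinarith [Finset.prod_nonneg (fun c (_ : c ∈ B.erase b₀) => by linarith [ha1 c] : ∀ c ∈ B.erase b₀, (0:ℝ) ≤ 1 - a c), hsum, ha0 b₀, ha1 b₀]
      · push_neg at hx
        have h1 : (∏ b ∈ B, (if E b x then 1 else 1 - a b)) = ∏ b ∈ B, (1 - a b) :=
          Finset.prod_congr rfl (fun b hb => if_neg (hx b hb))
        have h2 : (∑ b ∈ B, (if E b x then a b * ∏ c ∈ B.erase b, (1 - a c) else 0)) = 0 :=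
          Finset.sum_eq_zero (fun b hb => if_neg (hx b hb))
        rw [h1, h2, add_zero]
    -- step 4 : sum over x
    have step4 : (∑ x : α, ∑ g : Fin n → α,
          if (∀ b ∈ B, ∃ i, E b (Fin.cons (α := fun _ => α) x g i)) then ∏ i, μ (Fin.cons (α := fun _ => α) x g i) else 0)
        ≤ (∏ b ∈ B, (1 - a b)) + ∑ b ∈ B, q b * (a b * ∏ c ∈ B.erase b, (1 - a c)) := by
      calc (∑ x : α, ∑ g : Fin n → α,
          if (∀ b ∈ B, ∃ i, E b (Fin.cons (α := fun _ => α) x g i)) then ∏ i, μ (Fin.cons (α := fun _ => α) x g i) else 0)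
          ≤ ∑ x : α, μ x * ((∏ b ∈ B, (1 - a b)) + ∑ b ∈ B, (if E b x then a b * ∏ c ∈ B.erase b, (1 - a c) else 0)) := by
            refine Finset.sum_le_sum (fun x _ => le_trans (step x) ?_)
            exact mul_le_mul_of_nonneg_left (point x) (hμ0 x)
        _ = (∏ b ∈ B, (1 - a b)) + ∑ b ∈ B, q b * (a b * ∏ c ∈ B.erase b, (1 - a c)) := by
            have expand : ∀ x : α, μ x * ((∏ b ∈ B, (1 - a b)) + ∑ b ∈ B, (if E b x then a b * ∏ c ∈ B.erase b, (1 - a c) else 0))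
                = μ x * (∏ b ∈ B, (1 - a b)) + ∑ b ∈ B, (if E b x then μ x else 0) * (a b * ∏ c ∈ B.erase b, (1 - a c)) := by
              intro x
              rw [mul_add, Finset.mul_sum]
              congr 1
              refine Finset.sum_congr rfl (fun b _ => ?_)
              by_cases h : E b x <;> simp [h]
            rw [Finset.sum_congr rfl (fun x _ => expand x), Finset.sum_add_distrib,
              ← Finset.sum_mul, hμ1, one_mul, Finset.sum_comm]
            congr 1
            refine Finset.sum_congr rfl (fun b _ => ?_)
            rw [← Finset.sum_mul]
    refine le_trans step4 ?_
    -- step 5 : final algebra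
    have hfac : ∀ b ∈ B, (1 - (1 - q b) ^ (n+1)) = q b * a b + (1 - a b) := by
      intro b _
      simp only [ha]
      rw [pow_succ]
      ring
    rw [Finset.prod_congr rfl hfac, Finset.prod_add (fun b => q b * a b) (fun b => 1 - a b) B]
    have hT : insert (∅ : Finset β) (B.image fun b => {b}) ⊆ B.powerset := by
      intro t ht
      rw [Finset.mem_insert] at ht
      rcases ht with rfl | ht
      · exact Finset.empty_mem_powerset B
      · obtain ⟨b, hb, rfl⟩ := Finset.mem_image.1 ht
        exact Finset.mem_powerset.2 (Finset.singleton_subset_iff.2 hb)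
    have hnn : ∀ t ∈ B.powerset, (0:ℝ) ≤ (∏ b ∈ t, q b * a b) * ∏ b ∈ B \ t, (1 - a b) :=
      fun t _ => mul_nonneg (Finset.prod_nonneg fun b _ => mul_nonneg (hq0 b) (ha0 b))
        (Finset.prod_nonneg fun b _ => by linarith [ha1 b])
    refine le_trans (le_of_eq ?_) (Finset.sum_le_sum_of_subset_of_nonneg hT (fun t ht _ => hnn t ht))
    rw [Finset.sum_insert (by
      intro h
      obtain ⟨b, _, hb⟩ := Finset.mem_image.1 h
      exact Finset.singleton_ne_empty b hb)]
    rw [Finset.sum_image (fun b _ b' _ h => Finset.singleton_injective h)]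
    rw [Finset.prod_empty, one_mul, Finset.sdiff_empty]
    congr 1
    refine Finset.sum_congr rfl (fun b _ => ?_)
    rw [Finset.prod_singleton, Finset.sdiff_singleton_eq_erase, mul_assoc]

end Aux

/-- Negative correlation of branch realization: if the branches in `B` pairwise disagree
on some instance, then for a random class of `n` i.i.d. Bernoulli(`p`) hypotheses, the
probability that all branches of `B` are realized is at most the product of the
probabilities that each branch is realized. -/

theorem branch_realization_negatively_correlated (n m : ℕ) (p : ℝ)
    (hp0 : 0 ≤ p) (hp1 : p ≤ 1)
    (B : Finset (Fin m → Option Bool))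
    (hdis : ∀ b ∈ B, ∀ b' ∈ B, b ≠ b' →
      ∃ (t : Fin m) (y y' : Bool), b t = some y ∧ b' t = some y' ∧ y ≠ y') :
    (∑ f : Fin n → Fin m → Bool,
        if (∀ b ∈ B, Realizes f b) then bernWeight n m p f else 0)
      ≤ ∏ b ∈ B, ∑ f : Fin n → Fin m → Bool,
          (if Realizes f b then bernWeight n m p f else 0) := by
  classical
  let μ : (Fin m → Bool) → ℝ := fun x => ∏ t, if x t = true then p else 1 - p
  let E : (Fin m → Option Bool) → (Fin m → Bool) → Prop :=
    fun b x => ∀ (t : Fin m) (y : Bool), b t = some y → x t = y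
  have hμ0 : ∀ x, 0 ≤ μ x :=
    fun x => Finset.prod_nonneg fun t _ => by by_cases h : x t = true <;> simp [h] <;> linarith
  have hμ1 : (∑ x : Fin m → Bool, μ x) = 1 := by
    have h := Finset.prod_univ_sum (fun _ : Fin m => (Finset.univ : Finset Bool))
      (fun _ v => if v = true then p else 1 - p)
    rw [Fintype.piFinset_univ] at h
    rw [show (∑ x : Fin m → Bool, μ x) = ∑ x : Fin m → Bool, ∏ t, (if x t = true then p else 1 - p) from rfl,
      ← h]
    simp
  have hdisj : ∀ b ∈ B, ∀ b' ∈ B, b ≠ b' → ∀ x, E b x → E b' x → False := by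
    intro b hb b' hb' hne x hEx hEx'
    obtain ⟨t, y, y', h1, h2, hyy⟩ := hdis b hb b' hb' hne
    exact hyy ((hEx t y h1).symm.trans (hEx' t y' h2))
  have h1 := main_key μ hμ0 hμ1 n B E hdisj
  have hW : ∀ f : Fin n → Fin m → Bool, bernWeight n m p f = ∏ i, μ (f i) := fun f => rfl
  refine le_trans (le_of_eq ?_) (le_trans h1 (le_of_eq (Finset.prod_congr rfl fun b hb => ?_)))
  · refine Finset.sum_congr rfl fun f _ => ?_
    by_cases h : ∀ b ∈ B, Realizes f b
    · rw [if_pos h, if_pos (show ∀ b ∈ B, ∃ i, E b (f i) from h), hW]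
    · rw [if_neg h, if_neg (show ¬ ∀ b ∈ B, ∃ i, E b (f i) from h)]
  · refine Eq.trans (single_realize μ hμ1 n (E b)).symm (Finset.sum_congr rfl fun f _ => ?_)
    by_cases h : Realizes f b
    · rw [if_pos (show ∃ i, E b (f i) from h), if_pos h, hW]
    · rw [if_neg (show ¬ ∃ i, E b (f i) from h), if_neg h]
end
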